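/- arXiv:1609.07625 — 7 statements merged into one kernel-verified Lean document; each statement's English description precedes it below -/
import Mathlib

section
/- Let h : ℝ → ℝ be infinitely differentiable and z ∈ ℝ. For Δx > 0 define the sliding average F(y) = (1/Δx)·∫_{y−Δx/2}^{y+Δx/2} h(t) dt, set f_m = F(z + (2m−1)Δx/2) for m = −2,…,2, and define the candidate fluxes f̂⁰(Δx) = (2f₋₂ − 7f₋₁ + 11f₀)/6, f̂¹(Δx) = (−f₋₁ + 5f₀ + 2f₁)/6, f̂²(Δx) = (2f₀ + 5f₁ − f₂)/6. Then, as Δx → 0⁺, f̂⁰(Δx) − h(z) + (1/4)·h'''(z)·Δx³ = O(Δx⁴), f̂¹(Δx) − h(z) − (1/12)·h'''(z)·Δx³ = O(Δx⁴), and f̂²(Δx) − h(z) + (1/12)·h'''(z)·Δx³ = O(Δx⁴). -/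
open Filter Asymptotics Topology MeasureTheory
open scoped ContDiff

/-- Sliding average of `h` over an interval of length `Δx` centered at `y`. -/
noncomputable def slidingAvg (h : ℝ → ℝ) (Δx y : ℝ) : ℝ :=
  (1 / Δx) * ∫ t in (y - Δx / 2)..(y + Δx / 2), h t

/-- Value of the sliding average of `h` at the grid node `x_{j+m} = z + (2m-1)Δx/2`,
where `z` is the cell interface. -/
noncomputable def nodeVal (h : ℝ → ℝ) (z Δx : ℝ) (m : ℤ) : ℝ :=
  slidingAvg h Δx (z + (2 * (m : ℝ) - 1) * Δx / 2)

/-- WENO candidate flux on the sub-stencil `S₀`. -/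
noncomputable def fhat0 (h : ℝ → ℝ) (z Δx : ℝ) : ℝ :=
  (2 * nodeVal h z Δx (-2) - 7 * nodeVal h z Δx (-1) + 11 * nodeVal h z Δx 0) / 6

/-- WENO candidate flux on the sub-stencil `S₁`. -/
noncomputable def fhat1 (h : ℝ → ℝ) (z Δx : ℝ) : ℝ :=
  (-nodeVal h z Δx (-1) + 5 * nodeVal h z Δx 0 + 2 * nodeVal h z Δx 1) / 6

/-- WENO candidate flux on the sub-stencil `S₂`. -/
noncomputable def fhat2 (h : ℝ → ℝ) (z Δx : ℝ) : ℝ :=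
  (2 * nodeVal h z Δx 0 + 5 * nodeVal h z Δx 1 - nodeVal h z Δx 2) / 6

lemma iterWithin_eq (f : ℝ → ℝ) (hf : ContDiff ℝ (⊤ : ℕ∞) f) (k : ℕ) :
    iteratedDerivWithin k f (Set.Icc (0:ℝ) 1) 0 = iteratedDeriv k f 0 := by
  have huniv : HasFTaylorSeriesUpToOn (⊤ : ℕ∞) f (ftaylorSeries ℝ f) Set.univ := by
    rw [← ftaylorSeriesWithin_univ]
    exact (hf.contDiffOn).ftaylorSeriesWithin uniqueDiffOn_univ
  have h := (huniv.mono (Set.subset_univ _)).eq_iteratedFDerivWithin_of_uniqueDiffOn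
    (m := k) (ENat.natCast_le_of_coe_top_le_withTop le_rfl k) (uniqueDiffOn_Icc one_pos)
    (Set.mem_Icc.mpr ⟨le_refl 0, zero_le_one⟩)
  rw [iteratedDerivWithin_eq_iteratedFDerivWithin, iteratedDeriv_eq_iteratedFDeriv, ← h]
  rfl

lemma taylor_bigO_aux (f : ℝ → ℝ) (hf : ContDiff ℝ (⊤ : ℕ∞) f) :
    (fun x : ℝ => f x - ∑ k ∈ Finset.range 5,
        ((k.factorial : ℝ)⁻¹ * iteratedDeriv k f 0) * x ^ k)
      =O[𝓝[>] (0:ℝ)] fun x => x ^ 5 := by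
  obtain ⟨C, hC⟩ := exists_taylor_mean_remainder_bound (n := 4) (a := (0:ℝ)) (b := 1)
    zero_le_one ((hf.of_le (ENat.natCast_le_of_coe_top_le_withTop le_rfl (4+1))).contDiffOn)
  rw [isBigO_iff]
  refine ⟨C, ?_⟩
  filter_upwards [Ioc_mem_nhdsGT one_pos] with x hx
  have hxpos : (0:ℝ) < x := hx.1
  have hx' : x ∈ Set.Icc (0:ℝ) 1 := ⟨le_of_lt hx.1, hx.2⟩
  have hb := hC x hx'
  rw [taylor_within_apply] at hb
  simp only [iterWithin_eq f hf, sub_zero, smul_eq_mul] at hb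
  have hsum : ∑ k ∈ Finset.range 5, ((k.factorial : ℝ)⁻¹ * iteratedDeriv k f 0) * x ^ k
      = ∑ k ∈ Finset.range (4+1), ((k.factorial : ℝ)⁻¹ * x ^ k) * iteratedDeriv k f 0 := by
    refine Finset.sum_congr rfl fun k _ => by ring
  rw [Real.norm_eq_abs, Real.norm_eq_abs, hsum]
  calc |f x - ∑ k ∈ Finset.range (4+1), ((k.factorial : ℝ)⁻¹ * x ^ k) * iteratedDeriv k f 0|
      ≤ C * x ^ 5 := hb
    _ = C * |x ^ 5| := by rw [abs_of_pos (by positivity : (0:ℝ) < x ^ 5)]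

lemma taylor_bigO (f : ℝ → ℝ) (hf : ContDiff ℝ (⊤ : ℕ∞) f) (z c : ℝ) :
    (fun x : ℝ => f (z + c * x)
        - ∑ k ∈ Finset.range 5,
            ((k.factorial : ℝ)⁻¹ * iteratedDeriv k f z) * c ^ k * x ^ k)
      =O[𝓝[>] (0:ℝ)] fun x => x ^ 5 := by
  have hshift : ContDiff ℝ (⊤ : ℕ∞) (fun y : ℝ => f (z + y)) :=
    hf.comp (contDiff_const.add contDiff_id)
  have hg : ContDiff ℝ (⊤ : ℕ∞) (fun x : ℝ => f (z + c * x)) :=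
    hf.comp (contDiff_const.add (contDiff_id.const_smul c))
  have hk : ∀ k : ℕ, iteratedDeriv k (fun x : ℝ => f (z + c * x)) 0
      = c ^ k * iteratedDeriv k f z := by
    intro k
    have h1 : (fun x : ℝ => f (z + c * x))
        = (fun x : ℝ => (fun y : ℝ => f (z + y)) (c * x)) := rfl
    rw [h1, iteratedDeriv_comp_const_mul
      (hshift.of_le (ENat.natCast_le_of_coe_top_le_withTop le_rfl k)) c]
    rw [iteratedDeriv_comp_const_add]
    norm_num
  have := taylor_bigO_aux (fun x : ℝ => f (z + c * x)) hg
  simp only [hk] at this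
  refine this.congr' ?_ (EventuallyEq.refl _ _)
  filter_upwards with x
  congr 1
  refine Finset.sum_congr rfl fun k _ => by ring

lemma div_bigO {E : ℝ → ℝ} (hE : E =O[𝓝[>] (0:ℝ)] fun x : ℝ => x ^ 5) :
    (fun x => E x / (6 * x)) =O[𝓝[>] (0:ℝ)] fun x : ℝ => x ^ 4 := by
  obtain ⟨C, hC⟩ := hE.bound
  rw [isBigO_iff]
  refine ⟨C / 6, ?_⟩
  filter_upwards [hC, self_mem_nhdsWithin] with x hx1 hx2
  have hx0 : (0:ℝ) < x := hx2
  rw [Real.norm_eq_abs] at hx1 ⊢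
  rw [Real.norm_eq_abs] at hx1 ⊢
  rw [abs_div, abs_of_pos (by positivity : (0:ℝ) < 6 * x), div_le_iff₀ (by positivity)]
  calc |E x| ≤ C * |x ^ 5| := hx1
    _ = C / 6 * |x ^ 4| * (6 * x) := by
        rw [abs_of_pos (by positivity : (0:ℝ) < x ^ 5),
          abs_of_pos (by positivity : (0:ℝ) < x ^ 4)]
        ring

set_option maxHeartbeats 2000000 in
/-- Taylor expansions of the three fifth-order WENO candidate fluxes:
`f̂ᵏ = h(z) ∓ c_k h'''(z) Δx³ + O(Δx⁴)` as `Δx → 0⁺`. -/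
theorem weno_candidate_flux_expansion (h : ℝ → ℝ) (hh : ContDiff ℝ (⊤ : ℕ∞) h) (z : ℝ) :
    ((fun Δx : ℝ => fhat0 h z Δx - h z + (1 / 4) * iteratedDeriv 3 h z * Δx ^ 3)
        =O[𝓝[>] (0 : ℝ)] fun Δx => Δx ^ 4) ∧
    ((fun Δx : ℝ => fhat1 h z Δx - h z - (1 / 12) * iteratedDeriv 3 h z * Δx ^ 3)
        =O[𝓝[>] (0 : ℝ)] fun Δx => Δx ^ 4) ∧
    ((fun Δx : ℝ => fhat2 h z Δx - h z + (1 / 12) * iteratedDeriv 3 h z * Δx ^ 3)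
        =O[𝓝[>] (0 : ℝ)] fun Δx => Δx ^ 4) := by
  have hcont : Continuous h := hh.continuous
  set H : ℝ → ℝ := fun y => ∫ t in z..y, h t with hHdef
  have hderiv : ∀ y : ℝ, HasDerivAt H (h y) y := fun y =>
    (hcont.integral_hasStrictDerivAt z y).hasDerivAt
  have hdH : deriv H = h := funext fun y => (hderiv y).deriv
  have hHs : ContDiff ℝ (⊤ : ℕ∞) H := by
    rw [contDiff_infty_iff_deriv, hdH]
    exact ⟨fun y => (hderiv y).differentiableAt, hh.of_le (by simp)⟩
  have ha1 : iteratedDeriv 1 H z = h z := by rw [iteratedDeriv_one, hdH]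
  have ha4 : iteratedDeriv 4 H z = iteratedDeriv 3 h z := by
    rw [show (4 : ℕ) = 3 + 1 from rfl, iteratedDeriv_succ', hdH]
  have hsub : ∀ a b : ℝ, (∫ t in a..b, h t) = H b - H a := by
    intro a b
    have hadd := intervalIntegral.integral_add_adjacent_intervals
      (hcont.intervalIntegrable (μ := volume) z a) (hcont.intervalIntegrable (μ := volume) a b)
    simp only [hHdef]
    linarith [hadd]
  have hsliding : ∀ x y : ℝ, slidingAvg h x y = (1/x) * (H (y + x/2) - H (y - x/2)) := by
    intro x y; rw [slidingAvg, hsub]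
  have hnode : ∀ (m : ℤ) (x : ℝ), nodeVal h z x m
      = (1/x) * (H (z + (m:ℝ)*x) - H (z + ((m:ℝ)-1)*x)) := by
    intro m x
    rw [nodeVal, hsliding]
    have e1 : z + (2*(m:ℝ)-1)*x/2 + x/2 = z + (m:ℝ)*x := by ring
    have e2 : z + (2*(m:ℝ)-1)*x/2 - x/2 = z + ((m:ℝ)-1)*x := by ring
    rw [e1, e2]
  have hnodeE : ∀ (m : ℤ) (x c d : ℝ), ((m:ℝ) = c) → ((m:ℝ) - 1 = d) →
      nodeVal h z x m = (1/x) * (H (z + c*x) - H (z + d*x)) := by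
    intro m x c d hc hd
    rw [hnode, hd, hc]
  have hT := taylor_bigO H hHs z
  refine ⟨?_, ?_, ?_⟩
  · have big := div_bigO ((((hT (-3)).const_mul_left (-2)).add
      ((hT (-2)).const_mul_left 9)).add
      (((hT (-1)).const_mul_left (-18)).add ((hT 0).const_mul_left 11)))
    refine Filter.EventuallyEq.trans_isBigO ?_ big
    filter_upwards [self_mem_nhdsWithin] with x hx
    have hx0 : x ≠ 0 := ne_of_gt hx
    simp only [fhat0, hnodeE (-2) x (-2) (-3) (by norm_num) (by norm_num),
      hnodeE (-1) x (-1) (-2) (by norm_num) (by norm_num),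
      hnodeE 0 x 0 (-1) (by norm_num) (by norm_num)]
    simp only [Finset.sum_range_succ, Finset.sum_range_zero]
    norm_num [Nat.factorial, ha1, ha4]
    field_simp
    ring
  · have big := div_bigO ((((hT (-2)).const_mul_left 1).add
      ((hT (-1)).const_mul_left (-6))).add
      (((hT 0).const_mul_left 3).add ((hT 1).const_mul_left 2)))
    refine Filter.EventuallyEq.trans_isBigO ?_ big
    filter_upwards [self_mem_nhdsWithin] with x hx
    have hx0 : x ≠ 0 := ne_of_gt hx
    simp only [fhat1, hnodeE (-1) x (-1) (-2) (by norm_num) (by norm_num),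
      hnodeE 0 x 0 (-1) (by norm_num) (by norm_num),
      hnodeE 1 x 1 0 (by norm_num) (by norm_num)]
    simp only [Finset.sum_range_succ, Finset.sum_range_zero]
    norm_num [Nat.factorial, ha1, ha4]
    field_simp
    ring
  · have big := div_bigO ((((hT (-1)).const_mul_left (-2)).add
      ((hT 0).const_mul_left (-3))).add
      (((hT 1).const_mul_left 6).add ((hT 2).const_mul_left (-1))))
    refine Filter.EventuallyEq.trans_isBigO ?_ big
    filter_upwards [self_mem_nhdsWithin] with x hx
    have hx0 : x ≠ 0 := ne_of_gt hx
    simp only [fhat2, hnodeE 0 x 0 (-1) (by norm_num) (by norm_num),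
      hnodeE 1 x 1 0 (by norm_num) (by norm_num),
      hnodeE 2 x 2 1 (by norm_num) (by norm_num)]
    simp only [Finset.sum_range_succ, Finset.sum_range_zero]
    norm_num [Nat.factorial, ha1, ha4]
    field_simp
    ring
end

section
/- Let h : ℝ → ℝ be infinitely differentiable and z ∈ ℝ. For Δx > 0 define the sliding average F(y) = (1/Δx)·∫_{y−Δx/2}^{y+Δx/2} h(t) dt, set f_m = F(z + (2m−1)Δx/2) for m = −2,…,2, and define f̂⁰(Δx) = (2f₋₂ − 7f₋₁ + 11f₀)/6, f̂¹(Δx) = (−f₋₁ + 5f₀ + 2f₁)/6, f̂²(Δx) = (2f₀ + 5f₁ − f₂)/6. Then with the ideal weights d₀ = 1/10, d₁ = 6/10, d₂ = 3/10 one has d₀·f̂⁰(Δx) + d₁·f̂¹(Δx) + d₂·f̂²(Δx) − h(z) = O(Δx⁵) as Δx → 0⁺. -/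
open Filter Asymptotics Topology MeasureTheory
open scoped ContDiff

lemma itd_zero_fun (n : ℕ) : iteratedDeriv n (fun _ : ℝ => (0:ℝ)) = fun _ => 0 := by
  induction n with
  | zero => simp [iteratedDeriv_zero]
  | succ n ih => rw [iteratedDeriv_succ', deriv_const']; exact ih

lemma itd_const_fun (c : ℝ) (n : ℕ) : iteratedDeriv (n+1) (fun _ : ℝ => c) = fun _ => 0 := by
  rw [iteratedDeriv_succ', deriv_const']; exact itd_zero_fun n

lemma itd_id2 (n : ℕ) : iteratedDeriv (n+2) (fun y : ℝ => y) = fun _ => 0 := by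
  rw [iteratedDeriv_succ']
  have : deriv (fun y : ℝ => y) = fun _ : ℝ => (1:ℝ) := by funext x; simp
  rw [this]; exact itd_const_fun 1 n

lemma smooth_nat {u : ℝ → ℝ} (hu : ContDiff ℝ ∞ u) (j : ℕ) : ContDiff ℝ j u :=
  hu.of_le (by exact_mod_cast le_top)

lemma itd_add' (j : ℕ) {u v : ℝ → ℝ} (hu : ContDiff ℝ ∞ u) (hv : ContDiff ℝ ∞ v) (x : ℝ) :
    iteratedDeriv j (fun t => u t + v t) x = iteratedDeriv j u x + iteratedDeriv j v x := by
  have := iteratedDerivWithin_add (Set.mem_univ x) uniqueDiffOn_univ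
    (smooth_nat hu j).contDiffWithinAt (smooth_nat hv j).contDiffWithinAt
  simpa [iteratedDerivWithin_univ, Pi.add_def] using this

lemma itd_cmul (j : ℕ) (c : ℝ) {u : ℝ → ℝ} (hu : ContDiff ℝ ∞ u) (x : ℝ) :
    iteratedDeriv j (fun t => c * u t) x = c * iteratedDeriv j u x := by
  have := iteratedDerivWithin_const_mul (Set.mem_univ x) uniqueDiffOn_univ c
    (smooth_nat hu j).contDiffWithinAt
  simpa [iteratedDerivWithin_univ] using this

lemma itd_affine (j : ℕ) {u : ℝ → ℝ} (hu : ContDiff ℝ ∞ u) (z k : ℝ) :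
    iteratedDeriv j (fun x => u (z + k * x)) 0 = k ^ j * iteratedDeriv j u z := by
  have h1 : ContDiff ℝ j (fun y : ℝ => u (z + y)) :=
    (smooth_nat hu j).comp (contDiff_const.add contDiff_id)
  have h2 := congrFun (iteratedDeriv_comp_const_mul h1 k) 0
  have h3 := congrFun (iteratedDeriv_comp_const_add j u z) (k * 0)
  simp only [mul_zero, add_zero] at h2 h3
  calc iteratedDeriv j (fun x => u (z + k * x)) 0
      = iteratedDeriv j (fun x => (fun y : ℝ => u (z + y)) (k * x)) 0 := rfl
    _ = k ^ j * iteratedDeriv j (fun y : ℝ => u (z + y)) 0 := by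
        rw [h2]
    _ = k ^ j * iteratedDeriv j u z := by rw [h3]

lemma isBigO_pow_of_itd_zero (n : ℕ) : ∀ (f : ℝ → ℝ), ContDiff ℝ ∞ f →
    (∀ j ≤ n, iteratedDeriv j f 0 = 0) → f =O[𝓝 (0:ℝ)] fun x => x ^ (n+1) := by
  induction n with
  | zero =>
    intro f hf hz
    have h0 : f 0 = 0 := by simpa using hz 0 le_rfl
    have hd : DifferentiableAt ℝ f 0 :=
      (hf.differentiable (by simp)).differentiableAt
    have := hd.hasDerivAt.isBigO_sub
    simpa [h0] using this
  | succ n ih =>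
    intro f hf hz
    have hdiffble : Differentiable ℝ f := hf.differentiable (by simp)
    have hf' : ContDiff ℝ ∞ (deriv f) := (contDiff_infty_iff_deriv.mp hf).2
    have hz' : ∀ j ≤ n, iteratedDeriv j (deriv f) 0 = 0 := by
      intro j hj
      rw [← iteratedDeriv_succ']
      exact hz (j+1) (by omega)
    have hO := ih (deriv f) hf' hz'
    rw [isBigO_iff] at hO
    obtain ⟨C, hC⟩ := hO
    rw [Metric.eventually_nhds_iff] at hC
    obtain ⟨ε, hε, hball⟩ := hC
    have h0 : f 0 = 0 := by simpa using hz 0 (Nat.zero_le _)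
    rw [isBigO_iff]
    refine ⟨|C|, Metric.eventually_nhds_iff.mpr ⟨ε, hε, fun x hx => ?_⟩⟩
    have hxε : ‖x‖ < ε := by simpa [Real.dist_eq] using hx
    have hbound : ∀ y ∈ Metric.closedBall (0:ℝ) ‖x‖,
        ‖deriv f y‖ ≤ |C| * ‖x‖^(n+1) := by
      intro y hy
      have hyx : ‖y‖ ≤ ‖x‖ := by
        simpa [Real.dist_eq] using Metric.mem_closedBall.mp hy
      have h1 : ‖deriv f y‖ ≤ C * ‖y^(n+1)‖ := by
        refine hball ?_
        rw [Real.dist_eq, sub_zero]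
        exact lt_of_le_of_lt hyx hxε
      calc ‖deriv f y‖ ≤ C * ‖y^(n+1)‖ := h1
        _ ≤ |C| * ‖y‖^(n+1) := by
            rw [norm_pow]
            exact mul_le_mul_of_nonneg_right (le_abs_self C) (by positivity)
        _ ≤ |C| * ‖x‖^(n+1) := by gcongr
    have hmvt := Convex.norm_image_sub_le_of_norm_deriv_le
      (s := Metric.closedBall (0:ℝ) ‖x‖) (f := f)
      (fun y _ => hdiffble.differentiableAt) hbound (convex_closedBall _ _)
      
      (Metric.mem_closedBall_self (norm_nonneg x))
      (Metric.mem_closedBall.mpr (by simp [Real.dist_eq]))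
      (x := (0:ℝ)) (y := x)
    rw [h0, sub_zero, sub_zero] at hmvt
    calc ‖f x‖ ≤ (|C| * ‖x‖^(n+1)) * ‖x‖ := hmvt
      _ = |C| * ‖x^(n+1+1)‖ := by rw [norm_pow]; ring


/-- With the ideal weights `d₀ = 1/10, d₁ = 6/10, d₂ = 3/10`, the linear combination of
the three WENO candidate fluxes approximates `h(z)` to fifth order as `Δx → 0⁺`. -/
theorem weno_ideal_weights_fifth_order (h : ℝ → ℝ) (hh : ContDiff ℝ (⊤ : ℕ∞) h) (z : ℝ) :
    (fun Δx : ℝ =>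
        (1 / 10) * fhat0 h z Δx + (6 / 10) * fhat1 h z Δx + (3 / 10) * fhat2 h z Δx - h z)
      =O[𝓝[>] (0 : ℝ)] fun Δx => Δx ^ 5 := by
  have hc : Continuous h := hh.continuous
  set H : ℝ → ℝ := fun x => ∫ t in z..x, h t with hHdef
  have hHd : ∀ x, HasDerivAt H (h x) x := fun x => (hc.integral_hasStrictDerivAt z x).hasDerivAt
  have hderivH : deriv H = h := funext fun x => (hHd x).deriv
  have hH : ContDiff ℝ ∞ H := contDiff_infty_iff_deriv.mpr
    ⟨fun x => (hHd x).differentiableAt, by rw [hderivH]; exact hh.of_le (by simp)⟩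
  have hHz : H z = 0 := intervalIntegral.integral_same
  set G : ℝ → ℝ := fun x =>
    (-(1/30)) * H (z + (-3) * x) + (1/4) * H (z + (-2) * x) + (-1) * H (z + (-1) * x)
      + (1/2) * H (z + 1 * x) + (-(1/20)) * H (z + 2 * x) + (-(h z)) * x with hGdef
  have hA : ∀ k : ℝ, ContDiff ℝ ∞ (fun x : ℝ => H (z + k * x)) := fun k =>
    hH.comp (contDiff_const.add (contDiff_const.mul contDiff_id))
  have hT6 : ContDiff ℝ ∞ (fun x : ℝ => (-(h z)) * x) := contDiff_const.mul contDiff_id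
  have h1 : ContDiff ℝ ∞ (fun x : ℝ => (-(1/30)) * H (z + (-3) * x)) := contDiff_const.mul (hA (-3))
  have h2 : ContDiff ℝ ∞ (fun x : ℝ => (1/4) * H (z + (-2) * x)) := contDiff_const.mul (hA (-2))
  have h3 : ContDiff ℝ ∞ (fun x : ℝ => (-1 : ℝ) * H (z + (-1) * x)) := contDiff_const.mul (hA (-1))
  have h4 : ContDiff ℝ ∞ (fun x : ℝ => (1/2) * H (z + 1 * x)) := contDiff_const.mul (hA 1)
  have h5 : ContDiff ℝ ∞ (fun x : ℝ => (-(1/20)) * H (z + 2 * x)) := contDiff_const.mul (hA 2)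
  have h12 : ContDiff ℝ ∞ (fun x : ℝ =>
      (-(1/30)) * H (z + (-3) * x) + (1/4) * H (z + (-2) * x)) := h1.add h2
  have h13 : ContDiff ℝ ∞ (fun x : ℝ =>
      (-(1/30)) * H (z + (-3) * x) + (1/4) * H (z + (-2) * x) + (-1) * H (z + (-1) * x)) :=
    h12.add h3
  have h14 : ContDiff ℝ ∞ (fun x : ℝ =>
      (-(1/30)) * H (z + (-3) * x) + (1/4) * H (z + (-2) * x) + (-1) * H (z + (-1) * x)
        + (1/2) * H (z + 1 * x)) := h13.add h4
  have h15 : ContDiff ℝ ∞ (fun x : ℝ =>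
      (-(1/30)) * H (z + (-3) * x) + (1/4) * H (z + (-2) * x) + (-1) * H (z + (-1) * x)
        + (1/2) * H (z + 1 * x) + (-(1/20)) * H (z + 2 * x)) := h14.add h5
  have hG : ContDiff ℝ ∞ G := h15.add hT6
  have hsplit : ∀ j : ℕ, iteratedDeriv j G 0 =
      ((-(1/30)) * (-3:ℝ)^j + (1/4) * (-2:ℝ)^j + (-1) * (-1:ℝ)^j + (1/2) * (1:ℝ)^j
        + (-(1/20)) * (2:ℝ)^j) * iteratedDeriv j H z
        + (-(h z)) * iteratedDeriv j (fun y : ℝ => y) 0 := by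
    intro j
    have e1 : iteratedDeriv j G 0 =
        iteratedDeriv j (fun x : ℝ =>
          (-(1/30)) * H (z + (-3) * x) + (1/4) * H (z + (-2) * x) + (-1) * H (z + (-1) * x)
            + (1/2) * H (z + 1 * x) + (-(1/20)) * H (z + 2 * x)) 0
          + iteratedDeriv j (fun x : ℝ => (-(h z)) * x) 0 := itd_add' j h15 hT6 0
    have e2 : iteratedDeriv j (fun x : ℝ =>
          (-(1/30)) * H (z + (-3) * x) + (1/4) * H (z + (-2) * x) + (-1) * H (z + (-1) * x)
            + (1/2) * H (z + 1 * x) + (-(1/20)) * H (z + 2 * x)) 0 =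
        iteratedDeriv j (fun x : ℝ =>
          (-(1/30)) * H (z + (-3) * x) + (1/4) * H (z + (-2) * x) + (-1) * H (z + (-1) * x)
            + (1/2) * H (z + 1 * x)) 0
          + iteratedDeriv j (fun x : ℝ => (-(1/20)) * H (z + 2 * x)) 0 := itd_add' j h14 h5 0
    have e3 : iteratedDeriv j (fun x : ℝ =>
          (-(1/30)) * H (z + (-3) * x) + (1/4) * H (z + (-2) * x) + (-1) * H (z + (-1) * x)
            + (1/2) * H (z + 1 * x)) 0 =
        iteratedDeriv j (fun x : ℝ =>
          (-(1/30)) * H (z + (-3) * x) + (1/4) * H (z + (-2) * x)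
            + (-1) * H (z + (-1) * x)) 0
          + iteratedDeriv j (fun x : ℝ => (1/2) * H (z + 1 * x)) 0 := itd_add' j h13 h4 0
    have e4 : iteratedDeriv j (fun x : ℝ =>
          (-(1/30)) * H (z + (-3) * x) + (1/4) * H (z + (-2) * x)
            + (-1) * H (z + (-1) * x)) 0 =
        iteratedDeriv j (fun x : ℝ =>
          (-(1/30)) * H (z + (-3) * x) + (1/4) * H (z + (-2) * x)) 0
          + iteratedDeriv j (fun x : ℝ => (-1 : ℝ) * H (z + (-1) * x)) 0 := itd_add' j h12 h3 0
    have e5 : iteratedDeriv j (fun x : ℝ =>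
          (-(1/30)) * H (z + (-3) * x) + (1/4) * H (z + (-2) * x)) 0 =
        iteratedDeriv j (fun x : ℝ => (-(1/30)) * H (z + (-3) * x)) 0
          + iteratedDeriv j (fun x : ℝ => (1/4) * H (z + (-2) * x)) 0 := itd_add' j h1 h2 0
    have f1 : iteratedDeriv j (fun x : ℝ => (-(1/30)) * H (z + (-3) * x)) 0
        = (-(1/30)) * ((-3:ℝ)^j * iteratedDeriv j H z) :=
      (itd_cmul j (-(1/30)) (hA (-3)) 0).trans (by rw [itd_affine j hH z (-3)])
    have f2 : iteratedDeriv j (fun x : ℝ => (1/4) * H (z + (-2) * x)) 0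
        = (1/4) * ((-2:ℝ)^j * iteratedDeriv j H z) :=
      (itd_cmul j (1/4) (hA (-2)) 0).trans (by rw [itd_affine j hH z (-2)])
    have f3 : iteratedDeriv j (fun x : ℝ => (-1 : ℝ) * H (z + (-1) * x)) 0
        = (-1 : ℝ) * ((-1:ℝ)^j * iteratedDeriv j H z) :=
      (itd_cmul j (-1) (hA (-1)) 0).trans (by rw [itd_affine j hH z (-1)])
    have f4 : iteratedDeriv j (fun x : ℝ => (1/2) * H (z + 1 * x)) 0
        = (1/2) * ((1:ℝ)^j * iteratedDeriv j H z) :=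
      (itd_cmul j (1/2) (hA 1) 0).trans (by rw [itd_affine j hH z 1])
    have f5 : iteratedDeriv j (fun x : ℝ => (-(1/20)) * H (z + 2 * x)) 0
        = (-(1/20)) * ((2:ℝ)^j * iteratedDeriv j H z) :=
      (itd_cmul j (-(1/20)) (hA 2) 0).trans (by rw [itd_affine j hH z 2])
    have f6 : iteratedDeriv j (fun x : ℝ => (-(h z)) * x) 0
        = (-(h z)) * iteratedDeriv j (fun y : ℝ => y) 0 :=
      itd_cmul j (-(h z)) contDiff_id 0
    rw [e1, e2, e3, e4, e5, f1, f2, f3, f4, f5, f6]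
    ring
  have hiter : ∀ j ≤ 5, iteratedDeriv j G 0 = 0 := by
    intro j hj
    interval_cases j
    · rw [hsplit]; simp [hHz]
    · rw [hsplit, iteratedDeriv_one, hderivH]
      simp only [iteratedDeriv_one, deriv_id'']
      norm_num
    · rw [hsplit, congrFun (itd_id2 0) 0]; norm_num
    · rw [hsplit, congrFun (itd_id2 1) 0]; norm_num
    · rw [hsplit, congrFun (itd_id2 2) 0]; norm_num
    · rw [hsplit, congrFun (itd_id2 3) 0]; norm_num
  have hObig : G =O[𝓝 (0:ℝ)] fun x => x ^ 6 := isBigO_pow_of_itd_zero 5 G hG hiter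
  have hint : ∀ a b : ℝ, ∫ t in a..b, h t = H b - H a := by
    intro a b
    exact (intervalIntegral.integral_interval_sub_left
      (hc.intervalIntegrable z b) (hc.intervalIntegrable z a)).symm
  have hEq : ∀ x : ℝ, 0 < x →
      (1/10) * fhat0 h z x + (6/10) * fhat1 h z x + (3/10) * fhat2 h z x - h z = G x / x := by
    intro x hx
    have hx' : x ≠ 0 := hx.ne'
    simp only [fhat0, fhat1, fhat2, nodeVal, slidingAvg, hint, hGdef]
    push_cast
    field_simp
    ring_nf
    simp only [hHz]
    ring_nf
  rw [isBigO_iff] at hObig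
  obtain ⟨C, hC⟩ := hObig
  rw [isBigO_iff]
  refine ⟨C, ?_⟩
  filter_upwards [self_mem_nhdsWithin, hC.filter_mono nhdsWithin_le_nhds] with x hx1 hx2
  have hx : (0:ℝ) < x := hx1
  rw [hEq x hx]
  have hnorm : ‖G x / x‖ = ‖G x‖ / x := by
    rw [norm_div, Real.norm_eq_abs x, abs_of_pos hx]
  rw [hnorm]
  have h6 : ‖x ^ 6‖ = x ^ 6 := by
    rw [Real.norm_eq_abs, abs_of_pos (pow_pos hx 6)]
  have h5' : ‖x ^ 5‖ = x ^ 5 := by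
    rw [Real.norm_eq_abs, abs_of_pos (pow_pos hx 5)]
  rw [h5']
  rw [h6] at hx2
  calc ‖G x‖ / x ≤ C * x ^ 6 / x := by
        exact (div_le_div_iff_of_pos_right hx).mpr hx2
    _ = C * x ^ 5 := by field_simp
end

section
/- Fix Δx > 0, x₀ ∈ ℝ and real values v₋₂, v₋₁, v₀, v₁, v₂. For k ∈ {0,1,2} let p_k be the unique polynomial of degree at most 2 with p_k(x₀ + mΔx) = v_m for m = k−2, k−1, k. Then Δx·∫_{x₀−Δx/2}^{x₀+Δx/2} p_k'(x)² dx + Δx³·∫_{x₀−Δx/2}^{x₀+Δx/2} p_k''(x)² dx equals: (13/12)(v₋₂ − 2v₋₁ + v₀)² + (1/4)(v₋₂ − 4v₋₁ + 3v₀)² for k = 0; (13/12)(v₋₁ − 2v₀ + v₁)² + (1/4)(v₁ − v₋₁)² for k = 1; and (13/12)(v₀ − 2v₁ + v₂)² + (1/4)(3v₀ − 4v₁ + v₂)² for k = 2. -/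
/-!
A polynomial `p = a₀ + a₁ X + a₂ X²` has affine derivative and constant second derivative `2 a₂`,
so on the cell centred at `x₀` the indicator is `Δx² p'(x₀)² + (13/3) a₂² Δx⁴`. The exact Taylor
expansion `p(x₀ + mΔx) = p(x₀) + p'(x₀) mΔx + a₂ (mΔx)²` then shows that the second difference of
the data is `2 a₂ Δx²` and the combination inside the `1/4`-term is `± 2 Δx p'(x₀)`, in each of the
three stencils. Existence and uniqueness of `p_k` is Lagrange interpolation on three distinct nodes.
-/

open MeasureTheory Polynomial Finset

theorem existsUnique_eval_eq_of_degree_le {F ι : Type*} [Field F] [DecidableEq ι] {s : Finset ι}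
    {x : ι → F} (hx : Set.InjOn x s) {n : ℕ} (hs : #s = n + 1) (y : ι → F) :
    ∃! p : F[X], p.degree ≤ n ∧ ∀ i ∈ s, p.eval (x i) = y i := by
  have hdeg (p : F[X]) : p.degree ≤ n ↔ p.degree < #s := by
    rw [← mem_degreeLE, ← degreeLT_succ_eq_degreeLE, mem_degreeLT, hs]
  simp_rw [hdeg, Lagrange.eq_interpolate_iff y hx]
  exact existsUnique_eq

namespace Polynomial

variable {R : Type*} [CommRing R] {p : R[X]}

theorem eval_eq_taylor_of_degree_le_two (hp : p.degree ≤ 2) (x y : R) :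
    p.eval y = p.eval x + p.derivative.eval x * (y - x) + p.coeff 2 * (y - x) ^ 2 := by
  rw [eq_quadratic_of_degree_le_two hp]
  simp only [eval_add, eval_mul, eval_C, eval_pow, eval_X, derivative_mul, derivative_C,
    zero_mul, derivative_X_pow_succ, Nat.cast_one, map_add, map_one, pow_one, zero_add,
    derivative_X, mul_one, add_zero, eval_one, coeff_add, coeff_C_mul, coeff_X_pow, ↓reduceIte,
    coeff_mul_X, coeff_C_succ]
  ring

theorem eval_derivative_eq_of_degree_le_two (hp : p.degree ≤ 2) (x y : R) :
    p.derivative.eval y = p.derivative.eval x + 2 * p.coeff 2 * (y - x) := by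
  rw [eq_quadratic_of_degree_le_two hp]
  simp only [derivative_mul, derivative_C, zero_mul, derivative_X_pow_succ,
    Nat.cast_one, map_add, map_one, pow_one, zero_add, derivative_X, mul_one, add_zero, eval_add,
    eval_mul, eval_C, eval_one, eval_X, coeff_add, coeff_C_mul, coeff_X_pow, ↓reduceIte,
    coeff_mul_X, coeff_C_succ]
  ring

theorem eval_derivative_derivative_of_degree_le_two (hp : p.degree ≤ 2) (x : R) :
    p.derivative.derivative.eval x = 2 * p.coeff 2 := by
  rw [eq_quadratic_of_degree_le_two hp]
  simp only [derivative_mul, derivative_C, zero_mul, derivative_X_pow_succ,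
    Nat.cast_one, map_add, map_one, pow_one, zero_add, derivative_X, mul_one, add_zero,
    derivative_one, eval_mul, eval_C, eval_add, eval_one, coeff_add, coeff_C_mul, coeff_X_pow,
    ↓reduceIte, coeff_mul_X, coeff_C_succ]
  ring

end Polynomial

theorem integral_sq_affine_centered (a b c h : ℝ) :
    ∫ x in (c - h / 2)..(c + h / 2), (a + b * (x - c)) ^ 2 = h * a ^ 2 + b ^ 2 * h ^ 3 / 12 := by
  have hprimitive (x : ℝ) :
      HasDerivAt (fun x => a ^ 2 * (x - c) + a * b * (x - c) ^ 2 + b ^ 2 * (x - c) ^ 3 / 3)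
        ((a + b * (x - c)) ^ 2) x := by
    have hx : HasDerivAt (fun x => x - c) 1 x := (hasDerivAt_id' x).sub_const c
    refine (((hx.const_mul (a ^ 2)).add ((hx.pow 2).const_mul (a * b))).add
      (((hx.pow 3).const_mul (b ^ 2)).div_const 3)).congr_deriv ?_
    push_cast
    ring
  rw [intervalIntegral.integral_eq_sub_of_hasDerivAt (fun x _ => hprimitive x)
    (Continuous.intervalIntegrable (by fun_prop) _ _)]
  ring

theorem smoothness_indicator_of_degree_le_two {p : ℝ[X]} (hp : p.degree ≤ 2) (x₀ h : ℝ) :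
    h * (∫ x in (x₀ - h / 2)..(x₀ + h / 2), (p.derivative.eval x) ^ 2)
      + h ^ 3 * (∫ x in (x₀ - h / 2)..(x₀ + h / 2), (p.derivative.derivative.eval x) ^ 2)
      = h ^ 2 * (p.derivative.eval x₀) ^ 2 + 13 / 3 * p.coeff 2 ^ 2 * h ^ 4 := by
  have hderiv_sq : (fun x => (p.derivative.eval x) ^ 2)
      = fun x => (p.derivative.eval x₀ + 2 * p.coeff 2 * (x - x₀)) ^ 2 :=
    funext fun x => by rw [eval_derivative_eq_of_degree_le_two hp x₀ x]
  rw [hderiv_sq, integral_sq_affine_centered]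
  simp_rw [eval_derivative_derivative_of_degree_le_two hp, intervalIntegral.integral_const,
    smul_eq_mul]
  ring

/-- Closed-form evaluation of the Jiang–Shu smoothness indicator
`β_k = Δx ∫ (p_k')² + Δx³ ∫ (p_k'')²` of the quadratic interpolant `p_k` of the data
`v_{k-2}, v_{k-1}, v_k` at the nodes `x₀ + mΔx`, `m = k-2, k-1, k`, for `k ∈ {0,1,2}`. -/
theorem jiang_shu_smoothness_indicator_closed_form (Δx : ℝ) (hΔx : 0 < Δx) (x₀ : ℝ)
    (v : ℤ → ℝ) :
    ∀ k : ℤ, k ∈ ({0, 1, 2} : Set ℤ) →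
      (∃! p : Polynomial ℝ, p.degree ≤ 2 ∧
        ∀ m ∈ ({k - 2, k - 1, k} : Set ℤ), p.eval (x₀ + (m : ℝ) * Δx) = v m) ∧
      (∀ p : Polynomial ℝ, p.degree ≤ 2 →
        (∀ m ∈ ({k - 2, k - 1, k} : Set ℤ), p.eval (x₀ + (m : ℝ) * Δx) = v m) →
        Δx * (∫ x in (x₀ - Δx / 2)..(x₀ + Δx / 2), (p.derivative.eval x) ^ 2)
          + Δx ^ 3 * (∫ x in (x₀ - Δx / 2)..(x₀ + Δx / 2), (p.derivative.derivative.eval x) ^ 2)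
        = if k = 0 then
            (13 / 12) * (v (-2) - 2 * v (-1) + v 0) ^ 2
              + (1 / 4) * (v (-2) - 4 * v (-1) + 3 * v 0) ^ 2
          else if k = 1 then
            (13 / 12) * (v (-1) - 2 * v 0 + v 1) ^ 2 + (1 / 4) * (v 1 - v (-1)) ^ 2
          else
            (13 / 12) * (v 0 - 2 * v 1 + v 2) ^ 2
              + (1 / 4) * (3 * v 0 - 4 * v 1 + v 2) ^ 2) := by
  intro k hk
  have hnodes : Function.Injective fun m : ℤ => x₀ + (m : ℝ) * Δx :=
    (add_right_injective x₀).comp ((mul_left_injective₀ hΔx.ne').comp Int.cast_injective)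
  refine ⟨?_, fun p hp hv => ?_⟩
  · have hcard : #({k - 2, k - 1, k} : Finset ℤ) = 2 + 1 := by grind
    simpa using existsUnique_eval_eq_of_degree_le hnodes.injOn hcard v
  · have hdata (m : ℤ) (hm : m ∈ ({k - 2, k - 1, k} : Set ℤ)) :
        v m = p.eval x₀ + p.derivative.eval x₀ * (m * Δx) + p.coeff 2 * (m * Δx) ^ 2 := by
      rw [← hv m hm, eval_eq_taylor_of_degree_le_two hp x₀, add_sub_cancel_left]
    rw [smoothness_indicator_of_degree_le_two hp]
    simp only [Set.mem_insert_iff, Set.mem_singleton_iff] at hk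
    rcases hk with rfl | rfl | rfl <;> norm_num [hdata] <;> ring
end

section
/- Let f : ℝ → ℝ be infinitely differentiable and x₀ ∈ ℝ. For Δx > 0 set f_m = f(x₀ + mΔx) and β₀(Δx) = (13/12)(f₋₂ − 2f₋₁ + f₀)² + (1/4)(f₋₂ − 4f₋₁ + 3f₀)². Then, as Δx → 0⁺, β₀(Δx) − [ f'(x₀)²·Δx² + ((13/12)f''(x₀)² − (2/3)f'(x₀)f'''(x₀))·Δx⁴ + (−(13/6)f''(x₀)f'''(x₀) + (1/2)f'(x₀)f⁗(x₀))·Δx⁵ ] = O(Δx⁶). -/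
open Filter Asymptotics Topology Set

/-- Order-6 Taylor remainder bound for `h ↦ f (x₀ - h)` on `[0, 1]`. -/
lemma taylor6_aux (f : ℝ → ℝ) (hf : ContDiff ℝ (⊤ : ℕ∞) f) (x₀ : ℝ) :
    ∃ C : ℝ, ∀ h ∈ Set.Icc (0:ℝ) 1,
      |f (x₀ - h) - (f x₀ - deriv f x₀ * h + iteratedDeriv 2 f x₀ / 2 * h ^ 2 - iteratedDeriv 3 f x₀ / 6 * h ^ 3 + iteratedDeriv 4 f x₀ / 24 * h ^ 4 - iteratedDeriv 5 f x₀ / 120 * h ^ 5)| ≤ C * h ^ 6 := by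
  set g : ℝ → ℝ := fun h => f (x₀ - h) with hgdef
  have hg : ContDiff ℝ (⊤ : ℕ∞) g := hf.comp (contDiff_const.sub contDiff_id)
  have hiter : ∀ k : ℕ, iteratedDerivWithin k g (Set.Icc (0:ℝ) 1) 0
      = (-1 : ℝ) ^ k * iteratedDeriv k f x₀ := by
    intro k
    have hk : ContDiff ℝ (k : ℕ∞) g := hg.of_le (by exact_mod_cast le_top)
    have H : HasFTaylorSeriesUpTo (k : ℕ∞) g (ftaylorSeries ℝ g) :=
      contDiff_iff_ftaylorSeries.mp hk
    have H2 := (H.hasFTaylorSeriesUpToOn (Set.Icc (0:ℝ) 1)).eq_iteratedFDerivWithin_of_uniqueDiffOn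
      le_rfl (uniqueDiffOn_Icc one_pos) (Set.mem_Icc.mpr ⟨le_rfl, zero_le_one⟩)
    have h1 : iteratedDerivWithin k g (Set.Icc (0:ℝ) 1) 0 = iteratedDeriv k g 0 := by
      rw [iteratedDerivWithin_eq_iteratedFDerivWithin, iteratedDeriv_eq_iteratedFDeriv, ← H2]; rfl
    rw [h1]
    have hgg : g = fun x : ℝ => (fun z : ℝ => f (x₀ + z)) (-x) := by
      funext x; simp [hgdef, sub_eq_add_neg]
    rw [hgg, iteratedDeriv_comp_neg k (fun z : ℝ => f (x₀ + z)) 0,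
      iteratedDeriv_comp_const_add]
    simp [smul_eq_mul]
  obtain ⟨C, hC⟩ := exists_taylor_mean_remainder_bound (f := g) (a := 0) (b := 1) (n := 5)
    zero_le_one ((hg.of_le (by exact WithTop.coe_le_coe.mpr (le_top : ((5 + 1 : ℕ) : ℕ∞) ≤ ⊤))).contDiffOn)
  refine ⟨C, fun h hh => ?_⟩
  have hb := hC h hh
  have hsum : taylorWithinEval g 5 (Set.Icc (0:ℝ) 1) 0 h = (f x₀ - deriv f x₀ * h + iteratedDeriv 2 f x₀ / 2 * h ^ 2 - iteratedDeriv 3 f x₀ / 6 * h ^ 3 + iteratedDeriv 4 f x₀ / 24 * h ^ 4 - iteratedDeriv 5 f x₀ / 120 * h ^ 5) := by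
    rw [taylor_within_apply]
    simp only [Finset.sum_range_succ, Finset.sum_range_zero, zero_add, sub_zero,
      smul_eq_mul, hiter, iteratedDeriv_zero, iteratedDeriv_one]
    norm_num [Nat.factorial]
    ring
  rw [hsum] at hb
  have : ‖g h - (f x₀ - deriv f x₀ * h + iteratedDeriv 2 f x₀ / 2 * h ^ 2 - iteratedDeriv 3 f x₀ / 6 * h ^ 3 + iteratedDeriv 4 f x₀ / 24 * h ^ 4 - iteratedDeriv 5 f x₀ / 120 * h ^ 5)‖ ≤ C * (h - 0) ^ (5 + 1) := hb
  simpa [hgdef, Real.norm_eq_abs] using this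

/-- Taylor expansion of the Jiang–Shu smoothness indicator `β₀` of the left-most
sub-stencil `{x₀ - 2Δx, x₀ - Δx, x₀}`, as `Δx → 0⁺`. -/
theorem beta0_expansion (f : ℝ → ℝ) (hf : ContDiff ℝ (⊤ : ℕ∞) f) (x₀ : ℝ) :
    (fun Δx : ℝ =>
        ((13 / 12) * (f (x₀ - 2 * Δx) - 2 * f (x₀ - Δx) + f x₀) ^ 2
          + (1 / 4) * (f (x₀ - 2 * Δx) - 4 * f (x₀ - Δx) + 3 * f x₀) ^ 2)
        - ((deriv f x₀) ^ 2 * Δx ^ 2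
          + ((13 / 12) * (iteratedDeriv 2 f x₀) ^ 2
              - (2 / 3) * deriv f x₀ * iteratedDeriv 3 f x₀) * Δx ^ 4
          + (-(13 / 6) * iteratedDeriv 2 f x₀ * iteratedDeriv 3 f x₀
              + (1 / 2) * deriv f x₀ * iteratedDeriv 4 f x₀) * Δx ^ 5))
      =O[𝓝[>] (0 : ℝ)] fun Δx => Δx ^ 6 := by
  obtain ⟨C, hC⟩ := taylor6_aux f hf x₀
  have hmem : Set.Ioc (0:ℝ) (1/2) ∈ 𝓝[>] (0:ℝ) :=
    Ioc_mem_nhdsGT_of_mem ⟨le_rfl, by norm_num⟩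
  -- remainder bounds
  have hE : (fun h : ℝ => f (x₀ - h) - (f x₀ - deriv f x₀ * h + iteratedDeriv 2 f x₀ / 2 * h ^ 2 - iteratedDeriv 3 f x₀ / 6 * h ^ 3 + iteratedDeriv 4 f x₀ / 24 * h ^ 4 - iteratedDeriv 5 f x₀ / 120 * h ^ 5)) =O[𝓝[>] (0:ℝ)] fun h => h ^ 6 := by
    rw [Asymptotics.isBigO_iff]
    refine ⟨C, ?_⟩
    filter_upwards [hmem] with h hh
    have hb := hC h ⟨hh.1.le, hh.2.trans (by norm_num)⟩
    have h6 : (0:ℝ) < h ^ 6 := pow_pos hh.1 6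
    rw [Real.norm_eq_abs, Real.norm_eq_abs, abs_of_pos h6]
    exact hb
  have hE2 : (fun h : ℝ => f (x₀ - 2 * h) - (f x₀ - deriv f x₀ * (2 * h) + iteratedDeriv 2 f x₀ / 2 * (2 * h) ^ 2 - iteratedDeriv 3 f x₀ / 6 * (2 * h) ^ 3 + iteratedDeriv 4 f x₀ / 24 * (2 * h) ^ 4 - iteratedDeriv 5 f x₀ / 120 * (2 * h) ^ 5)) =O[𝓝[>] (0:ℝ)] fun h => h ^ 6 := by
    rw [Asymptotics.isBigO_iff]
    refine ⟨64 * C, ?_⟩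
    filter_upwards [hmem] with h hh
    have h2m : 2 * h ∈ Set.Icc (0:ℝ) 1 := ⟨by linarith [hh.1.le], by linarith [hh.2]⟩
    have hb := hC (2 * h) h2m
    have h6 : (0:ℝ) < h ^ 6 := pow_pos hh.1 6
    rw [Real.norm_eq_abs, Real.norm_eq_abs, abs_of_pos h6]
    calc |f (x₀ - 2 * h) - (f x₀ - deriv f x₀ * (2 * h) + iteratedDeriv 2 f x₀ / 2 * (2 * h) ^ 2 - iteratedDeriv 3 f x₀ / 6 * (2 * h) ^ 3 + iteratedDeriv 4 f x₀ / 24 * (2 * h) ^ 4 - iteratedDeriv 5 f x₀ / 120 * (2 * h) ^ 5)| ≤ C * (2 * h) ^ 6 := hb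
      _ = 64 * C * h ^ 6 := by ring
  have he1 : (fun h : ℝ => ((f (x₀ - 2 * h) - (f x₀ - deriv f x₀ * (2 * h) + iteratedDeriv 2 f x₀ / 2 * (2 * h) ^ 2 - iteratedDeriv 3 f x₀ / 6 * (2 * h) ^ 3 + iteratedDeriv 4 f x₀ / 24 * (2 * h) ^ 4 - iteratedDeriv 5 f x₀ / 120 * (2 * h) ^ 5)) - 2 * (f (x₀ - h) - (f x₀ - deriv f x₀ * h + iteratedDeriv 2 f x₀ / 2 * h ^ 2 - iteratedDeriv 3 f x₀ / 6 * h ^ 3 + iteratedDeriv 4 f x₀ / 24 * h ^ 4 - iteratedDeriv 5 f x₀ / 120 * h ^ 5)))) =O[𝓝[>] (0:ℝ)] fun h => h ^ 6 :=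
    hE2.sub (hE.const_mul_left 2)
  have he2 : (fun h : ℝ => ((f (x₀ - 2 * h) - (f x₀ - deriv f x₀ * (2 * h) + iteratedDeriv 2 f x₀ / 2 * (2 * h) ^ 2 - iteratedDeriv 3 f x₀ / 6 * (2 * h) ^ 3 + iteratedDeriv 4 f x₀ / 24 * (2 * h) ^ 4 - iteratedDeriv 5 f x₀ / 120 * (2 * h) ^ 5)) - 4 * (f (x₀ - h) - (f x₀ - deriv f x₀ * h + iteratedDeriv 2 f x₀ / 2 * h ^ 2 - iteratedDeriv 3 f x₀ / 6 * h ^ 3 + iteratedDeriv 4 f x₀ / 24 * h ^ 4 - iteratedDeriv 5 f x₀ / 120 * h ^ 5)))) =O[𝓝[>] (0:ℝ)] fun h => h ^ 6 :=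
    hE2.sub (hE.const_mul_left 4)
  have hone : ∀ u : ℝ → ℝ, Continuous u → u =O[𝓝[>] (0:ℝ)] fun _ => (1:ℝ) := by
    intro u hu
    exact ((hu.tendsto 0).mono_left nhdsWithin_le_nhds).isBigO_one ℝ
  have hP1 : (fun h : ℝ => (iteratedDeriv 2 f x₀ * h ^ 2 - iteratedDeriv 3 f x₀ * h ^ 3 + 7 / 12 * iteratedDeriv 4 f x₀ * h ^ 4 - 1 / 4 * iteratedDeriv 5 f x₀ * h ^ 5)) =O[𝓝[>] (0:ℝ)] fun _ => (1:ℝ) :=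
    hone _ (by fun_prop)
  have hP2 : (fun h : ℝ => (2 * deriv f x₀ * h - 2 / 3 * iteratedDeriv 3 f x₀ * h ^ 3 + 1 / 2 * iteratedDeriv 4 f x₀ * h ^ 4 - 7 / 30 * iteratedDeriv 5 f x₀ * h ^ 5)) =O[𝓝[>] (0:ℝ)] fun _ => (1:ℝ) :=
    hone _ (by fun_prop)
  have hR : (fun h : ℝ => (-(7 / 30) * deriv f x₀ * iteratedDeriv 5 f x₀ + 91 / 72 * iteratedDeriv 2 f x₀ * iteratedDeriv 4 f x₀ + 43 / 36 * iteratedDeriv 3 f x₀ ^ 2 + (-(13 / 24) * iteratedDeriv 2 f x₀ * iteratedDeriv 5 f x₀ - 103 / 72 * iteratedDeriv 3 f x₀ * iteratedDeriv 4 f x₀) * h + (223 / 360 * iteratedDeriv 3 f x₀ * iteratedDeriv 5 f x₀ + 745 / 1728 * iteratedDeriv 4 f x₀ ^ 2) * h ^ 2 + (-(539 / 1440) * iteratedDeriv 4 f x₀ * iteratedDeriv 5 f x₀) * h ^ 3 + 1171 / 14400 * iteratedDeriv 5 f x₀ ^ 2 * h ^ 4)) =O[𝓝[>] (0:ℝ)]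 fun _ => (1:ℝ) :=
    hone _ (by fun_prop)
  have hsq : (fun h : ℝ => h ^ 6 * h ^ 6) =O[𝓝[>] (0:ℝ)] fun h => h ^ 6 := by
    rw [Asymptotics.isBigO_iff]
    refine ⟨1, ?_⟩
    filter_upwards [hmem] with h hh
    have h0 : (0:ℝ) < h := hh.1
    have h1 : h ≤ 1 := hh.2.trans (by norm_num)
    have h6 : (0:ℝ) < h ^ 6 := pow_pos h0 6
    have h61 : h ^ 6 ≤ 1 := pow_le_one₀ h0.le h1
    rw [Real.norm_eq_abs, Real.norm_eq_abs, abs_of_pos h6, abs_of_pos (by positivity), one_mul]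
    nlinarith
  have hA : (fun h : ℝ => h ^ 6 * (-(7 / 30) * deriv f x₀ * iteratedDeriv 5 f x₀ + 91 / 72 * iteratedDeriv 2 f x₀ * iteratedDeriv 4 f x₀ + 43 / 36 * iteratedDeriv 3 f x₀ ^ 2 + (-(13 / 24) * iteratedDeriv 2 f x₀ * iteratedDeriv 5 f x₀ - 103 / 72 * iteratedDeriv 3 f x₀ * iteratedDeriv 4 f x₀) * h + (223 / 360 * iteratedDeriv 3 f x₀ * iteratedDeriv 5 f x₀ + 745 / 1728 * iteratedDeriv 4 f x₀ ^ 2) * h ^ 2 + (-(539 / 1440) * iteratedDeriv 4 f x₀ * iteratedDeriv 5 f x₀) * h ^ 3 + 1171 / 14400 * iteratedDeriv 5 f x₀ ^ 2 * h ^ 4)) =O[𝓝[>] (0:ℝ)] fun h => h ^ 6 :=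
    (((isBigO_refl (fun h : ℝ => h ^ 6) _).mul hR).congr (fun _ => rfl) fun x => mul_one _)
  have hB : (fun h : ℝ => (iteratedDeriv 2 f x₀ * h ^ 2 - iteratedDeriv 3 f x₀ * h ^ 3 + 7 / 12 * iteratedDeriv 4 f x₀ * h ^ 4 - 1 / 4 * iteratedDeriv 5 f x₀ * h ^ 5) * ((f (x₀ - 2 * h) - (f x₀ - deriv f x₀ * (2 * h) + iteratedDeriv 2 f x₀ / 2 * (2 * h) ^ 2 - iteratedDeriv 3 f x₀ / 6 * (2 * h) ^ 3 + iteratedDeriv 4 f x₀ / 24 * (2 * h) ^ 4 - iteratedDeriv 5 f x₀ / 120 * (2 * h) ^ 5)) - 2 * (f (x₀ - h) - (f x₀ - deriv f x₀ * h + iteratedDeriv 2 f x₀ / 2 * h ^ 2 - iteratedDeriv 3 f x₀ / 6 * h ^ 3 + iteratedDeriv 4 f x₀ / 24 * h ^ 4 - iteratedDeriv 5 f x₀ / 120 * h ^ 5)))) =O[𝓝[>] (0:ℝ)] fun h => h ^ 6 :=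
    ((hP1.mul he1).congr (fun _ => rfl) fun x => one_mul _)
  have hD : (fun h : ℝ => (2 * deriv f x₀ * h - 2 / 3 * iteratedDeriv 3 f x₀ * h ^ 3 + 1 / 2 * iteratedDeriv 4 f x₀ * h ^ 4 - 7 / 30 * iteratedDeriv 5 f x₀ * h ^ 5) * ((f (x₀ - 2 * h) - (f x₀ - deriv f x₀ * (2 * h) + iteratedDeriv 2 f x₀ / 2 * (2 * h) ^ 2 - iteratedDeriv 3 f x₀ / 6 * (2 * h) ^ 3 + iteratedDeriv 4 f x₀ / 24 * (2 * h) ^ 4 - iteratedDeriv 5 f x₀ / 120 * (2 * h) ^ 5)) - 4 * (f (x₀ - h) - (f x₀ - deriv f x₀ * h + iteratedDeriv 2 f x₀ / 2 * h ^ 2 - iteratedDeriv 3 f x₀ / 6 * h ^ 3 + iteratedDeriv 4 f x₀ / 24 * h ^ 4 - iteratedDeriv 5 f x₀ / 120 * h ^ 5)))) =O[𝓝[>] (0:ℝ)] fun h => h ^ 6 :=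
    ((hP2.mul he2).congr (fun _ => rfl) fun x => one_mul _)
  have hCsq : (fun h : ℝ => ((f (x₀ - 2 * h) - (f x₀ - deriv f x₀ * (2 * h) + iteratedDeriv 2 f x₀ / 2 * (2 * h) ^ 2 - iteratedDeriv 3 f x₀ / 6 * (2 * h) ^ 3 + iteratedDeriv 4 f x₀ / 24 * (2 * h) ^ 4 - iteratedDeriv 5 f x₀ / 120 * (2 * h) ^ 5)) - 2 * (f (x₀ - h) - (f x₀ - deriv f x₀ * h + iteratedDeriv 2 f x₀ / 2 * h ^ 2 - iteratedDeriv 3 f x₀ / 6 * h ^ 3 + iteratedDeriv 4 f x₀ / 24 * h ^ 4 - iteratedDeriv 5 f x₀ / 120 * h ^ 5))) * ((f (x₀ - 2 * h) - (f x₀ - deriv f x₀ * (2 * h) + iteratedDeriv 2 f x₀ / 2 * (2 * h) ^ 2 - iteratedDeriv 3 f x₀ / 6 * (2 * h) ^ 3 + iteratedDeriv 4 f x₀ / 24 * (2 * h) ^ 4 - iteratedDeriv 5 f x₀ / 120 * (2 * h) ^ 5)) - 2 * (f (x₀ - h) - (f x₀ - deriv f x₀ * h + iteratedDeriv 2 f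 x₀ / 2 * h ^ 2 - iteratedDeriv 3 f x₀ / 6 * h ^ 3 + iteratedDeriv 4 f x₀ / 24 * h ^ 4 - iteratedDeriv 5 f x₀ / 120 * h ^ 5)))) =O[𝓝[>] (0:ℝ)] fun h => h ^ 6 :=
    (he1.mul he1).trans hsq
  have hEsq : (fun h : ℝ => ((f (x₀ - 2 * h) - (f x₀ - deriv f x₀ * (2 * h) + iteratedDeriv 2 f x₀ / 2 * (2 * h) ^ 2 - iteratedDeriv 3 f x₀ / 6 * (2 * h) ^ 3 + iteratedDeriv 4 f x₀ / 24 * (2 * h) ^ 4 - iteratedDeriv 5 f x₀ / 120 * (2 * h) ^ 5)) - 4 * (f (x₀ - h) - (f x₀ - deriv f x₀ * h + iteratedDeriv 2 f x₀ / 2 * h ^ 2 - iteratedDeriv 3 f x₀ / 6 * h ^ 3 + iteratedDeriv 4 f x₀ / 24 * h ^ 4 - iteratedDeriv 5 f x₀ / 120 * h ^ 5))) * ((f (x₀ - 2 * h) - (f x₀ - deriv f x₀ * (2 * h) + iteratedDeriv 2 f x₀ / 2 * (2 * h) ^ 2 - iteratedDeriv 3 f x₀ / 6 * (2 * h) ^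 3 + iteratedDeriv 4 f x₀ / 24 * (2 * h) ^ 4 - iteratedDeriv 5 f x₀ / 120 * (2 * h) ^ 5)) - 4 * (f (x₀ - h) - (f x₀ - deriv f x₀ * h + iteratedDeriv 2 f x₀ / 2 * h ^ 2 - iteratedDeriv 3 f x₀ / 6 * h ^ 3 + iteratedDeriv 4 f x₀ / 24 * h ^ 4 - iteratedDeriv 5 f x₀ / 120 * h ^ 5)))) =O[𝓝[>] (0:ℝ)] fun h => h ^ 6 :=
    (he2.mul he2).trans hsq
  have key : (fun Δx : ℝ =>
        ((13 / 12) * (f (x₀ - 2 * Δx) - 2 * f (x₀ - Δx) + f x₀) ^ 2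
          + (1 / 4) * (f (x₀ - 2 * Δx) - 4 * f (x₀ - Δx) + 3 * f x₀) ^ 2)
        - ((deriv f x₀) ^ 2 * Δx ^ 2
          + ((13 / 12) * (iteratedDeriv 2 f x₀) ^ 2
              - (2 / 3) * deriv f x₀ * iteratedDeriv 3 f x₀) * Δx ^ 4
          + (-(13 / 6) * iteratedDeriv 2 f x₀ * iteratedDeriv 3 f x₀
              + (1 / 2) * deriv f x₀ * iteratedDeriv 4 f x₀) * Δx ^ 5))
      = fun h : ℝ => h ^ 6 * (-(7 / 30) * deriv f x₀ * iteratedDeriv 5 f x₀ + 91 / 72 * iteratedDeriv 2 f x₀ * iteratedDeriv 4 f x₀ + 43 / 36 * iteratedDeriv 3 f x₀ ^ 2 + (-(13 / 24) * iteratedDeriv 2 f x₀ * iteratedDeriv 5 f x₀ - 103 / 72 * iteratedDeriv 3 f x₀ * iteratedDeriv 4 f x₀) * h + (223 / 360 * iteratedDeriv 3 f x₀ * iteratedDeriv 5 f x₀ + 745 / 1728 * iteratedDeriv 4 f x₀ ^ 2) * h ^ 2 + (-(539 / 1440) * iteratedDeriv 4 f x₀ * iteratedDeriv 5 f x₀)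 * h ^ 3 + 1171 / 14400 * iteratedDeriv 5 f x₀ ^ 2 * h ^ 4) + (13 / 6 * ((iteratedDeriv 2 f x₀ * h ^ 2 - iteratedDeriv 3 f x₀ * h ^ 3 + 7 / 12 * iteratedDeriv 4 f x₀ * h ^ 4 - 1 / 4 * iteratedDeriv 5 f x₀ * h ^ 5) * ((f (x₀ - 2 * h) - (f x₀ - deriv f x₀ * (2 * h) + iteratedDeriv 2 f x₀ / 2 * (2 * h) ^ 2 - iteratedDeriv 3 f x₀ / 6 * (2 * h) ^ 3 + iteratedDeriv 4 f x₀ / 24 * (2 * h) ^ 4 - iteratedDeriv 5 f x₀ / 120 * (2 * h) ^ 5)) - 2 * (f (x₀ - h) - (f x₀ - deriv f x₀ * h + iteratedDeriv 2 f x₀ / 2 * h ^ 2 - iteratedDeriv 3 f x₀ / 6 * h ^ 3 + iteratedDeriv 4 f x₀ / 24 * h ^ 4 - iteratedDeriv 5 f x₀ / 120 * h ^ 5)))) + (13 / 12 * (((f (x₀ - 2 * h) - (f x₀ - deriv f x₀ * (2 * h) + iteratedDeriv 2 f x₀ / 2 * (2 * h) ^ 2 - iteratedDeriv 3 f x₀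 / 6 * (2 * h) ^ 3 + iteratedDeriv 4 f x₀ / 24 * (2 * h) ^ 4 - iteratedDeriv 5 f x₀ / 120 * (2 * h) ^ 5)) - 2 * (f (x₀ - h) - (f x₀ - deriv f x₀ * h + iteratedDeriv 2 f x₀ / 2 * h ^ 2 - iteratedDeriv 3 f x₀ / 6 * h ^ 3 + iteratedDeriv 4 f x₀ / 24 * h ^ 4 - iteratedDeriv 5 f x₀ / 120 * h ^ 5))) * ((f (x₀ - 2 * h) - (f x₀ - deriv f x₀ * (2 * h) + iteratedDeriv 2 f x₀ / 2 * (2 * h) ^ 2 - iteratedDeriv 3 f x₀ / 6 * (2 * h) ^ 3 + iteratedDeriv 4 f x₀ / 24 * (2 * h) ^ 4 - iteratedDeriv 5 f x₀ / 120 * (2 * h) ^ 5)) - 2 * (f (x₀ - h) - (f x₀ - deriv f x₀ * h + iteratedDeriv 2 f x₀ / 2 * h ^ 2 - iteratedDeriv 3 f x₀ / 6 * h ^ 3 + iteratedDeriv 4 f x₀ / 24 * h ^ 4 - iteratedDeriv 5 f x₀ / 120 * h ^ 5)))) + (1 / 2 * ((2 * deriv f x₀ * h - 2 / 3 * iteratedDeriv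 3 f x₀ * h ^ 3 + 1 / 2 * iteratedDeriv 4 f x₀ * h ^ 4 - 7 / 30 * iteratedDeriv 5 f x₀ * h ^ 5) * ((f (x₀ - 2 * h) - (f x₀ - deriv f x₀ * (2 * h) + iteratedDeriv 2 f x₀ / 2 * (2 * h) ^ 2 - iteratedDeriv 3 f x₀ / 6 * (2 * h) ^ 3 + iteratedDeriv 4 f x₀ / 24 * (2 * h) ^ 4 - iteratedDeriv 5 f x₀ / 120 * (2 * h) ^ 5)) - 4 * (f (x₀ - h) - (f x₀ - deriv f x₀ * h + iteratedDeriv 2 f x₀ / 2 * h ^ 2 - iteratedDeriv 3 f x₀ / 6 * h ^ 3 + iteratedDeriv 4 f x₀ / 24 * h ^ 4 - iteratedDeriv 5 f x₀ / 120 * h ^ 5)))) + 1 / 4 * (((f (x₀ - 2 * h) - (f x₀ - deriv f x₀ * (2 * h) + iteratedDeriv 2 f x₀ / 2 * (2 * h) ^ 2 - iteratedDeriv 3 f x₀ / 6 * (2 * h) ^ 3 + iteratedDeriv 4 f x₀ / 24 * (2 * h) ^ 4 - iteratedDeriv 5 f x₀ / 120 * (2 * h) ^ 5)) - 4 * (f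 (x₀ - h) - (f x₀ - deriv f x₀ * h + iteratedDeriv 2 f x₀ / 2 * h ^ 2 - iteratedDeriv 3 f x₀ / 6 * h ^ 3 + iteratedDeriv 4 f x₀ / 24 * h ^ 4 - iteratedDeriv 5 f x₀ / 120 * h ^ 5))) * ((f (x₀ - 2 * h) - (f x₀ - deriv f x₀ * (2 * h) + iteratedDeriv 2 f x₀ / 2 * (2 * h) ^ 2 - iteratedDeriv 3 f x₀ / 6 * (2 * h) ^ 3 + iteratedDeriv 4 f x₀ / 24 * (2 * h) ^ 4 - iteratedDeriv 5 f x₀ / 120 * (2 * h) ^ 5)) - 4 * (f (x₀ - h) - (f x₀ - deriv f x₀ * h + iteratedDeriv 2 f x₀ / 2 * h ^ 2 - iteratedDeriv 3 f x₀ / 6 * h ^ 3 + iteratedDeriv 4 f x₀ / 24 * h ^ 4 - iteratedDeriv 5 f x₀ / 120 * h ^ 5))))))) := by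
    funext h
    ring
  rw [key]
  exact hA.add ((hB.const_mul_left (13/6)).add ((hCsq.const_mul_left (13/12)).add
    ((hD.const_mul_left (1/2)).add (hEsq.const_mul_left (1/4)))))
end

section
/- Let f : ℝ → ℝ be infinitely differentiable and x₀ ∈ ℝ. For Δx > 0 set f_m = f(x₀ + mΔx) and β₁(Δx) = (13/12)(f₋₁ − 2f₀ + f₁)² + (1/4)(f₁ − f₋₁)². Then, as Δx → 0⁺, β₁(Δx) − [ f'(x₀)²·Δx² + ((13/12)f''(x₀)² + (1/3)f'(x₀)f'''(x₀))·Δx⁴ ] = O(Δx⁶). -/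
open Filter Asymptotics Topology Set

lemma iDW_eq (g : ℝ → ℝ) (hg : ContDiff ℝ (⊤ : ℕ∞) g) (k : ℕ) :
    iteratedDerivWithin k g (Set.Icc (0:ℝ) 1) 0 = iteratedDeriv k g 0 := by
  have h := ((contDiff_iff_ftaylorSeries (𝕜 := ℝ) (f := g) (n := (⊤ : ℕ∞))).mp
    (hg.of_le (by simp))).hasFTaylorSeriesUpToOn (Set.Icc (0:ℝ) 1)
  have h2 := h.eq_iteratedFDerivWithin_of_uniqueDiffOn (m := k) (by exact_mod_cast le_top)
    (uniqueDiffOn_Icc one_pos) (Set.mem_Icc.mpr ⟨le_refl _, zero_le_one⟩)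
  rw [iteratedDerivWithin_eq_iteratedFDerivWithin, iteratedDeriv_eq_iteratedFDeriv, ← h2]
  rfl

lemma taylor6 (g : ℝ → ℝ) (hg : ContDiff ℝ (⊤ : ℕ∞) g) :
    (fun h : ℝ => g h - (g 0 + iteratedDeriv 1 g 0 * h + iteratedDeriv 2 g 0 / 2 * h ^ 2
      + iteratedDeriv 3 g 0 / 6 * h ^ 3 + iteratedDeriv 4 g 0 / 24 * h ^ 4
      + iteratedDeriv 5 g 0 / 120 * h ^ 5))
      =O[𝓝[>] (0 : ℝ)] fun h => h ^ 6 := by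
  obtain ⟨C, hC⟩ := exists_taylor_mean_remainder_bound (n := 5) zero_le_one
    ((hg.of_le (by exact WithTop.coe_le_coe.mpr le_top)).contDiffOn (s := Set.Icc (0:ℝ) 1))
  refine Asymptotics.IsBigO.of_bound C ?_
  filter_upwards [Ioc_mem_nhdsGT_of_mem (Set.mem_Ico.mpr ⟨le_refl _, zero_lt_one⟩)] with x hx
  have hx' : x ∈ Set.Icc (0:ℝ) 1 := ⟨hx.1.le, hx.2⟩
  have := hC x hx'
  rw [taylor_within_apply] at this
  simp only [Finset.sum_range_succ, Finset.sum_range_zero, iDW_eq g hg, sub_zero] at this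
  norm_num at this
  rw [Real.norm_eq_abs, Real.norm_eq_abs, abs_of_nonneg (pow_nonneg hx.1.le 6)]
  refine le_trans (le_of_eq ?_) this
  congr 1
  rw [iteratedDeriv_one]
  norm_num [Nat.factorial]
  ring

/-- Taylor expansion of the Jiang–Shu smoothness indicator `β₁` of the central
sub-stencil `{x₀ - Δx, x₀, x₀ + Δx}`, as `Δx → 0⁺`. -/
theorem beta1_expansion (f : ℝ → ℝ) (hf : ContDiff ℝ (⊤ : ℕ∞) f) (x₀ : ℝ) :
    (fun Δx : ℝ =>
        ((13 / 12) * (f (x₀ - Δx) - 2 * f x₀ + f (x₀ + Δx)) ^ 2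
          + (1 / 4) * (f (x₀ + Δx) - f (x₀ - Δx)) ^ 2)
        - ((deriv f x₀) ^ 2 * Δx ^ 2
          + ((13 / 12) * (iteratedDeriv 2 f x₀) ^ 2
              + (1 / 3) * deriv f x₀ * iteratedDeriv 3 f x₀) * Δx ^ 4))
      =O[𝓝[>] (0 : ℝ)] fun Δx => Δx ^ 6 := by
  have hfp : ContDiff ℝ (⊤ : ℕ∞) (fun h : ℝ => f (x₀ + h)) := hf.comp (contDiff_const.add contDiff_id)
  have hfm : ContDiff ℝ (⊤ : ℕ∞) (fun h : ℝ => f (x₀ - h)) := hf.comp (contDiff_const.sub contDiff_id)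
  have hdp : ∀ k, iteratedDeriv k (fun h : ℝ => f (x₀ + h)) 0 = iteratedDeriv k f x₀ := by
    intro k; rw [iteratedDeriv_comp_const_add]; simp
  have hdm : ∀ k, iteratedDeriv k (fun h : ℝ => f (x₀ - h)) 0
      = (-1 : ℝ) ^ k * iteratedDeriv k f x₀ := by
    intro k
    have e : (fun h : ℝ => f (x₀ - h)) = (fun x : ℝ => (fun z : ℝ => f (x₀ + z)) (-x)) :=
      funext fun h => by simp [sub_eq_add_neg]
    have h2 := iteratedDeriv_comp_neg k (fun z : ℝ => f (x₀ + z)) 0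
    simp only [neg_zero, hdp k, smul_eq_mul] at h2
    rw [e]; exact h2
  -- notation for derivatives
  have hd1 : iteratedDeriv 1 f x₀ = deriv f x₀ := by rw [iteratedDeriv_one]
  -- Taylor remainders
  have hA : (fun h : ℝ => f (x₀ + h) - (f x₀ + deriv f x₀ * h
      + iteratedDeriv 2 f x₀ / 2 * h ^ 2 + iteratedDeriv 3 f x₀ / 6 * h ^ 3
      + iteratedDeriv 4 f x₀ / 24 * h ^ 4 + iteratedDeriv 5 f x₀ / 120 * h ^ 5))
      =O[𝓝[>] (0 : ℝ)] fun h => h ^ 6 := by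
    have := taylor6 (fun h : ℝ => f (x₀ + h)) hfp
    simpa [hdp, hd1] using this
  have hB : (fun h : ℝ => f (x₀ - h) - (f x₀ - deriv f x₀ * h
      + iteratedDeriv 2 f x₀ / 2 * h ^ 2 - iteratedDeriv 3 f x₀ / 6 * h ^ 3
      + iteratedDeriv 4 f x₀ / 24 * h ^ 4 - iteratedDeriv 5 f x₀ / 120 * h ^ 5))
      =O[𝓝[>] (0 : ℝ)] fun h => h ^ 6 := by
    have := taylor6 (fun h : ℝ => f (x₀ - h)) hfm
    simp only [hdm, hd1] at this
    norm_num at this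
    exact this.congr_left fun h => by ring
  -- bounded factors
  have hcf : Continuous f := hf.continuous
  have hbigO_one : ∀ u : ℝ → ℝ, Continuous u → u =O[𝓝[>] (0 : ℝ)] (fun _ => (1 : ℝ)) :=
    fun u hu => ((hu.tendsto 0).mono_left nhdsWithin_le_nhds).isBigO_one ℝ
  set d1 := deriv f x₀
  set d2 := iteratedDeriv 2 f x₀
  set d3 := iteratedDeriv 3 f x₀
  set d4 := iteratedDeriv 4 f x₀
  set d5 := iteratedDeriv 5 f x₀
  set P : ℝ → ℝ := fun h => f x₀ + d1 * h + d2 / 2 * h ^ 2 + d3 / 6 * h ^ 3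
      + d4 / 24 * h ^ 4 + d5 / 120 * h ^ 5 with hP
  set Q : ℝ → ℝ := fun h => f x₀ - d1 * h + d2 / 2 * h ^ 2 - d3 / 6 * h ^ 3
      + d4 / 24 * h ^ 4 - d5 / 120 * h ^ 5 with hQ
  set R : ℝ → ℝ := fun h => (13/12) * (d2 * d4 / 6 + d4 ^ 2 * h ^ 2 / 144)
      + (1/4) * (d3 ^ 2 / 9 + d1 * d5 / 15 + d3 * d5 / 90 * h ^ 2 + d5 ^ 2 / 3600 * h ^ 4) with hR
  set U : ℝ → ℝ := fun h => (13/12) * (f (x₀ + h) + f (x₀ - h) + P h + Q h - 4 * f x₀)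
      + (1/4) * (f (x₀ + h) - f (x₀ - h) + P h - Q h) with hU
  set V : ℝ → ℝ := fun h => (13/12) * (f (x₀ + h) + f (x₀ - h) + P h + Q h - 4 * f x₀)
      - (1/4) * (f (x₀ + h) - f (x₀ - h) + P h - Q h) with hV
  have hPc : Continuous P := by rw [hP]; fun_prop
  have hQc : Continuous Q := by rw [hQ]; fun_prop
  have hRc : Continuous R := by rw [hR]; fun_prop
  have hUc : Continuous U := by
    rw [hU]; fun_prop
  have hVc : Continuous V := by
    rw [hV]; fun_prop
  have h1 : (fun h : ℝ => h ^ 6 * R h) =O[𝓝[>] (0 : ℝ)] fun h => h ^ 6 := by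
    simpa using (isBigO_refl (fun h : ℝ => h ^ 6) _).mul (hbigO_one R hRc)
  have h2 : (fun h : ℝ => (f (x₀ + h) - P h) * U h) =O[𝓝[>] (0 : ℝ)] fun h => h ^ 6 := by
    simpa using hA.mul (hbigO_one U hUc)
  have h3 : (fun h : ℝ => (f (x₀ - h) - Q h) * V h) =O[𝓝[>] (0 : ℝ)] fun h => h ^ 6 := by
    simpa using hB.mul (hbigO_one V hVc)
  refine ((h1.add h2).add h3).congr_left fun h => ?_
  simp only [hP, hQ, hR, hU, hV]
  ring
end

section
/- Let f : ℝ → ℝ be infinitely differentiable and x₀ ∈ ℝ. For Δx > 0 set f_m = f(x₀ + mΔx) and β₂(Δx) = (13/12)(f₀ − 2f₁ + f₂)² + (1/4)(3f₀ − 4f₁ + f₂)². Then, as Δx → 0⁺, β₂(Δx) − [ f'(x₀)²·Δx² + ((13/12)f''(x₀)² − (2/3)f'(x₀)f'''(x₀))·Δx⁴ + ((13/6)f''(x₀)f'''(x₀) − (1/2)f'(x₀)f⁗(x₀))·Δx⁵ ] = O(Δx⁶). -/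
open Filter Asymptotics Topology

open scoped Nat

open Set

lemma iterWithin_eq_s6 {g : ℝ → ℝ} (hg : ContDiff ℝ (⊤ : ℕ∞) g) (k : ℕ) :
    ∀ x ∈ Icc (0:ℝ) 1, iteratedDerivWithin k g (Icc 0 1) x = iteratedDeriv k g x := by
  induction k with
  | zero => intro x hx; simp
  | succ k ih =>
    intro x hx
    have hu : UniqueDiffWithinAt ℝ (Icc (0:ℝ) 1) x := (uniqueDiffOn_Icc one_pos) x hx
    rw [iteratedDerivWithin_succ, iteratedDeriv_succ,
      derivWithin_congr (fun y hy => ih y hy) (ih x hx)]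
    exact ((hg.differentiable_iteratedDeriv k (by exact WithTop.coe_lt_coe.mpr (ENat.coe_lt_top k))) x).derivWithin hu

lemma taylor_remainder_bigO {f : ℝ → ℝ} (hf : ContDiff ℝ (⊤ : ℕ∞) f) (x₀ : ℝ) :
    (fun h : ℝ => f (x₀ + h)
        - ∑ k ∈ Finset.range 6, (k ! : ℝ)⁻¹ * iteratedDeriv k f x₀ * h ^ k)
      =O[𝓝[>] (0:ℝ)] fun h => h ^ 6 := by
  set g : ℝ → ℝ := fun h => f (x₀ + h) with hgdef
  have hg : ContDiff ℝ (⊤ : ℕ∞) g := hf.comp (contDiff_const.add contDiff_id)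
  obtain ⟨C, hC⟩ := exists_taylor_mean_remainder_bound (n := 5) (a := 0) (b := 1)
    zero_le_one ((hg.of_le (by exact WithTop.coe_le_coe.mpr le_top)).contDiffOn)
  have hteval : ∀ x : ℝ, taylorWithinEval g 5 (Icc 0 1) 0 x
      = ∑ k ∈ Finset.range 6, (k ! : ℝ)⁻¹ * iteratedDeriv k f x₀ * x ^ k := by
    intro x
    rw [taylor_within_apply]
    refine Finset.sum_congr rfl fun k hk => ?_
    rw [iterWithin_eq_s6 hg k 0 (by simp)]
    have : iteratedDeriv k g 0 = iteratedDeriv k f x₀ := by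
      rw [hgdef, iteratedDeriv_comp_const_add]; simp
    rw [this, smul_eq_mul]; ring
  rw [isBigO_iff]
  refine ⟨C, ?_⟩
  filter_upwards [Ioc_mem_nhdsGT_of_mem (by constructor <;> norm_num :
      (0:ℝ) ∈ Set.Ico (0:ℝ) 1)] with h hh
  have hmem : h ∈ Icc (0:ℝ) 1 := ⟨hh.1.le, hh.2⟩
  have := hC h hmem
  rw [hteval] at this
  simpa [hgdef, abs_of_pos hh.1, abs_of_nonneg (pow_nonneg hh.1.le 6)] using this

/-- Taylor expansion of the Jiang–Shu smoothness indicator `β₂` of the right-most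
sub-stencil `{x₀, x₀ + Δx, x₀ + 2Δx}`, as `Δx → 0⁺`. -/
theorem beta2_expansion (f : ℝ → ℝ) (hf : ContDiff ℝ (⊤ : ℕ∞) f) (x₀ : ℝ) :
    (fun Δx : ℝ =>
        ((13 / 12) * (f x₀ - 2 * f (x₀ + Δx) + f (x₀ + 2 * Δx)) ^ 2
          + (1 / 4) * (3 * f x₀ - 4 * f (x₀ + Δx) + f (x₀ + 2 * Δx)) ^ 2)
        - ((deriv f x₀) ^ 2 * Δx ^ 2
          + ((13 / 12) * (iteratedDeriv 2 f x₀) ^ 2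
              - (2 / 3) * deriv f x₀ * iteratedDeriv 3 f x₀) * Δx ^ 4
          + ((13 / 6) * iteratedDeriv 2 f x₀ * iteratedDeriv 3 f x₀
              - (1 / 2) * deriv f x₀ * iteratedDeriv 4 f x₀) * Δx ^ 5))
      =O[𝓝[>] (0 : ℝ)] fun Δx => Δx ^ 6 := by
  have hd1 : deriv f x₀ = iteratedDeriv 1 f x₀ := (iteratedDeriv_one (f := f)).symm ▸ rfl
  set d1 := iteratedDeriv 1 f x₀ with hd1'
  set d2 := iteratedDeriv 2 f x₀ with hd2'
  set d3 := iteratedDeriv 3 f x₀ with hd3'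
  set d4 := iteratedDeriv 4 f x₀ with hd4'
  set d5 := iteratedDeriv 5 f x₀ with hd5'
  set E : ℝ → ℝ := fun h => f (x₀ + h)
      - ∑ k ∈ Finset.range 6, (k ! : ℝ)⁻¹ * iteratedDeriv k f x₀ * h ^ k with hEdef
  have hE : E =O[𝓝[>] (0:ℝ)] fun h => h ^ 6 := taylor_remainder_bigO hf x₀
  have hfe : ∀ h : ℝ, f (x₀ + h) = f x₀ + d1 * h + d2 / 2 * h ^ 2 + d3 / 6 * h ^ 3
      + d4 / 24 * h ^ 4 + d5 / 120 * h ^ 5 + E h := by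
    intro h
    simp only [hEdef, Finset.sum_range_succ, Finset.sum_range_zero, iteratedDeriv_zero]
    norm_num [Nat.factorial, hd1]
    ring
  -- continuity of E and limit 0
  have hEcont : Continuous E := by
    apply Continuous.sub
    · exact hf.continuous.comp (continuous_const.add continuous_id)
    · exact continuous_finset_sum _ fun k _ => by fun_prop
  have hE0 : E 0 = 0 := by
    simp [hEdef, Finset.sum_range_succ]
  have htE : Tendsto E (𝓝[>] (0:ℝ)) (𝓝 0) := by
    simpa [hE0] using (hEcont.tendsto 0).mono_left nhdsWithin_le_nhds
  have h2tend : Tendsto (fun h : ℝ => 2 * h) (𝓝[>] (0:ℝ)) (𝓝[>] (0:ℝ)) := by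
    apply tendsto_nhdsWithin_of_tendsto_nhds_of_eventually_within
    · simpa using (continuous_mul_left (2:ℝ)).tendsto (0:ℝ) |>.mono_left
        nhdsWithin_le_nhds
    · filter_upwards [self_mem_nhdsWithin] with h (hh : 0 < h)
      exact mul_pos two_pos hh
  have hE2 : (fun h : ℝ => E (2 * h)) =O[𝓝[>] (0:ℝ)] fun h => h ^ 6 := by
    have := (hE.comp_tendsto h2tend)
    have h64 : (fun h : ℝ => (2 * h) ^ 6) =O[𝓝[>] (0:ℝ)] fun h => h ^ 6 := by
      refine ((isBigO_refl (fun h : ℝ => h ^ 6) _).const_mul_left 64).congr_left ?_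
      intro x; ring
    exact this.trans h64
  have htE2 : Tendsto (fun h : ℝ => E (2 * h)) (𝓝[>] (0:ℝ)) (𝓝 0) := htE.comp h2tend
  -- the algebraic identity
  have hcalc : ∀ h : ℝ,
      ((13 / 12) * (f x₀ - 2 * f (x₀ + h) + f (x₀ + 2 * h)) ^ 2
          + (1 / 4) * (3 * f x₀ - 4 * f (x₀ + h) + f (x₀ + 2 * h)) ^ 2)
        - (d1 ^ 2 * h ^ 2 + ((13 / 12) * d2 ^ 2 - (2 / 3) * d1 * d3) * h ^ 4
          + ((13 / 6) * d2 * d3 - (1 / 2) * d1 * d4) * h ^ 5)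
      = h ^ 6 * ((-7/30 * d1 * d5 + 91/72 * d2 * d4 + 43/36 * d3 ^ 2)
            + (13/24 * d2 * d5 + 103/72 * d3 * d4) * h
            + (223/360 * d3 * d5 + 745/1728 * d4 ^ 2) * h ^ 2
            + 539/1440 * d4 * d5 * h ^ 3 + 1171/14400 * d5 ^ 2 * h ^ 4)
        + E h * (-13/3 * (d2 * h ^ 2 + d3 * h ^ 3 + 7/12 * d4 * h ^ 4 + 1/4 * d5 * h ^ 5)
            - 2 * (-2 * d1 * h + 2/3 * d3 * h ^ 3 + 1/2 * d4 * h ^ 4 + 7/30 * d5 * h ^ 5)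
            + 25/3 * E h - 19/3 * E (2 * h))
        + E (2 * h) * (13/6 * (d2 * h ^ 2 + d3 * h ^ 3 + 7/12 * d4 * h ^ 4 + 1/4 * d5 * h ^ 5)
            + 1/2 * (-2 * d1 * h + 2/3 * d3 * h ^ 3 + 1/2 * d4 * h ^ 4 + 7/30 * d5 * h ^ 5)
            + 4/3 * E (2 * h)) := by
    intro h
    rw [hfe h, hfe (2 * h)]
    ring
  -- big-O of the right-hand side
  have hS : (fun h : ℝ => h ^ 6 * ((-7/30 * d1 * d5 + 91/72 * d2 * d4 + 43/36 * d3 ^ 2)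
            + (13/24 * d2 * d5 + 103/72 * d3 * d4) * h
            + (223/360 * d3 * d5 + 745/1728 * d4 ^ 2) * h ^ 2
            + 539/1440 * d4 * d5 * h ^ 3 + 1171/14400 * d5 ^ 2 * h ^ 4))
      =O[𝓝[>] (0:ℝ)] fun h => h ^ 6 := by
    have hcont : Tendsto (fun h : ℝ => ((-7/30 * d1 * d5 + 91/72 * d2 * d4 + 43/36 * d3 ^ 2)
            + (13/24 * d2 * d5 + 103/72 * d3 * d4) * h
            + (223/360 * d3 * d5 + 745/1728 * d4 ^ 2) * h ^ 2
            + 539/1440 * d4 * d5 * h ^ 3 + 1171/14400 * d5 ^ 2 * h ^ 4)) (𝓝[>] (0:ℝ))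
        (𝓝 ((-7/30 * d1 * d5 + 91/72 * d2 * d4 + 43/36 * d3 ^ 2))) := by
      have : Continuous (fun h : ℝ => ((-7/30 * d1 * d5 + 91/72 * d2 * d4 + 43/36 * d3 ^ 2)
            + (13/24 * d2 * d5 + 103/72 * d3 * d4) * h
            + (223/360 * d3 * d5 + 745/1728 * d4 ^ 2) * h ^ 2
            + 539/1440 * d4 * d5 * h ^ 3 + 1171/14400 * d5 ^ 2 * h ^ 4)) := by fun_prop
      simpa using (this.tendsto 0).mono_left nhdsWithin_le_nhds
    simpa using (isBigO_refl (fun h : ℝ => h ^ 6) (𝓝[>] (0:ℝ))).mul (hcont.isBigO_one ℝ)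
  have hW1 : Tendsto (fun h : ℝ =>
        -13/3 * (d2 * h ^ 2 + d3 * h ^ 3 + 7/12 * d4 * h ^ 4 + 1/4 * d5 * h ^ 5)
            - 2 * (-2 * d1 * h + 2/3 * d3 * h ^ 3 + 1/2 * d4 * h ^ 4 + 7/30 * d5 * h ^ 5)
            + 25/3 * E h - 19/3 * E (2 * h)) (𝓝[>] (0:ℝ)) (𝓝 0) := by
    have hpoly : Tendsto (fun h : ℝ =>
        -13/3 * (d2 * h ^ 2 + d3 * h ^ 3 + 7/12 * d4 * h ^ 4 + 1/4 * d5 * h ^ 5)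
            - 2 * (-2 * d1 * h + 2/3 * d3 * h ^ 3 + 1/2 * d4 * h ^ 4 + 7/30 * d5 * h ^ 5))
        (𝓝[>] (0:ℝ)) (𝓝 0) := by
      have : Continuous (fun h : ℝ =>
        -13/3 * (d2 * h ^ 2 + d3 * h ^ 3 + 7/12 * d4 * h ^ 4 + 1/4 * d5 * h ^ 5)
            - 2 * (-2 * d1 * h + 2/3 * d3 * h ^ 3 + 1/2 * d4 * h ^ 4 + 7/30 * d5 * h ^ 5)) := by
        fun_prop
      simpa using (this.tendsto 0).mono_left nhdsWithin_le_nhds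
    simpa using (hpoly.add ((htE.const_mul (25/3)).add ((htE2.const_mul (19/3)).neg))).congr
      (fun h => by ring)
  have hW2 : Tendsto (fun h : ℝ =>
        13/6 * (d2 * h ^ 2 + d3 * h ^ 3 + 7/12 * d4 * h ^ 4 + 1/4 * d5 * h ^ 5)
            + 1/2 * (-2 * d1 * h + 2/3 * d3 * h ^ 3 + 1/2 * d4 * h ^ 4 + 7/30 * d5 * h ^ 5)
            + 4/3 * E (2 * h)) (𝓝[>] (0:ℝ)) (𝓝 0) := by
    have hpoly : Tendsto (fun h : ℝ =>
        13/6 * (d2 * h ^ 2 + d3 * h ^ 3 + 7/12 * d4 * h ^ 4 + 1/4 * d5 * h ^ 5)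
            + 1/2 * (-2 * d1 * h + 2/3 * d3 * h ^ 3 + 1/2 * d4 * h ^ 4 + 7/30 * d5 * h ^ 5))
        (𝓝[>] (0:ℝ)) (𝓝 0) := by
      have : Continuous (fun h : ℝ =>
        13/6 * (d2 * h ^ 2 + d3 * h ^ 3 + 7/12 * d4 * h ^ 4 + 1/4 * d5 * h ^ 5)
            + 1/2 * (-2 * d1 * h + 2/3 * d3 * h ^ 3 + 1/2 * d4 * h ^ 4 + 7/30 * d5 * h ^ 5)) := by
        fun_prop
      simpa using (this.tendsto 0).mono_left nhdsWithin_le_nhds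
    simpa using hpoly.add (htE2.const_mul (4/3))
  have hT1 := (hE.mul (hW1.isBigO_one ℝ)).congr_right (fun h => mul_one _)
  have hT2 := (hE2.mul (hW2.isBigO_one ℝ)).congr_right (fun h => mul_one _)
  have hsum := (hS.add hT1).add hT2
  rw [hd1]
  exact hsum.congr_left (fun h => (hcalc h).symm)
end

section
/- Let f : ℝ → ℝ be infinitely differentiable and x₀ ∈ ℝ. For Δx > 0 set f_m = f(x₀ + mΔx), β₀(Δx) = (13/12)(f₋₂ − 2f₋₁ + f₀)² + (1/4)(f₋₂ − 4f₋₁ + 3f₀)² and β₂(Δx) = (13/12)(f₀ − 2f₁ + f₂)² + (1/4)(3f₀ − 4f₁ + f₂)². Then, as Δx → 0⁺, β₀(Δx) − β₂(Δx) − ( f'(x₀)f⁗(x₀) − (13/3)f''(x₀)f'''(x₀) )·Δx⁵ = O(Δx⁶); in particular the WENO-Z global smoothness indicator τ₅(Δx) = |β₀(Δx) − β₂(Δx)| satisfies τ₅(Δx) = O(Δx⁵). -/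
open Filter Asymptotics Topology Set

lemma myIDW {f : ℝ → ℝ} (hf : ContDiff ℝ (⊤ : ℕ∞) f) {s : Set ℝ} (hs : UniqueDiffOn ℝ s)
    {x : ℝ} (hx : x ∈ s) (n : ℕ) : iteratedDerivWithin n f s x = iteratedDeriv n f x := by
  have h : HasFTaylorSeriesUpTo (n : ℕ∞) f (ftaylorSeries ℝ f) :=
    contDiff_iff_ftaylorSeries.mp (hf.of_le (by exact_mod_cast le_top))
  have h2 := (h.hasFTaylorSeriesUpToOn s).eq_iteratedFDerivWithin_of_uniqueDiffOn le_rfl hs hx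
    (m := n)
  rw [iteratedDerivWithin_eq_iteratedFDerivWithin, iteratedDeriv_eq_iteratedFDeriv, ← h2]
  rfl

lemma myChain {f : ℝ → ℝ} (hf : ContDiff ℝ (⊤ : ℕ∞) f) (x₀ m : ℝ) (k : ℕ) :
    iteratedDeriv k (fun t => f (x₀ + m * t)) 0 = m ^ k * iteratedDeriv k f x₀ := by
  have h1 : ContDiff ℝ (k : ℕ∞) (fun z => f (x₀ + z)) :=
    (hf.of_le (by exact_mod_cast le_top)).comp (contDiff_const.add contDiff_id)
  have h2 := congrFun (iteratedDeriv_comp_const_mul h1 m) 0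
  simp only [mul_zero] at h2
  rw [show (fun t => f (x₀ + m * t)) = (fun x => (fun z => f (x₀ + z)) (m * x)) from rfl, h2,
    congrFun (iteratedDeriv_comp_const_add k f x₀) 0, add_zero]

lemma myTaylor {f : ℝ → ℝ} (hf : ContDiff ℝ (⊤ : ℕ∞) f) (x₀ m : ℝ) :
    ∃ C : ℝ, ∀ t ∈ Icc (0:ℝ) 1,
      |f (x₀ + m * t) - (iteratedDeriv 0 f x₀ + iteratedDeriv 1 f x₀ * (m * t)
        + iteratedDeriv 2 f x₀ / 2 * (m * t) ^ 2 + iteratedDeriv 3 f x₀ / 6 * (m * t) ^ 3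
        + iteratedDeriv 4 f x₀ / 24 * (m * t) ^ 4 + iteratedDeriv 5 f x₀ / 120 * (m * t) ^ 5)|
      ≤ C * t ^ 6 := by
  set g : ℝ → ℝ := fun t => f (x₀ + m * t) with hgdef
  have hg : ContDiff ℝ (⊤ : ℕ∞) g := hf.comp (contDiff_const.add (contDiff_const.mul contDiff_id))
  obtain ⟨C, hC⟩ := exists_taylor_mean_remainder_bound (n := 5) zero_le_one
    ((hg.of_le (WithTop.coe_le_coe.mpr (le_top : ((5 + 1 : ℕ) : ℕ∞) ≤ ⊤))).contDiffOn (s := Icc (0:ℝ) 1))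
  refine ⟨C, fun t ht => ?_⟩
  have hT : taylorWithinEval g 5 (Icc (0:ℝ) 1) 0 t
      = iteratedDeriv 0 f x₀ + iteratedDeriv 1 f x₀ * (m * t)
        + iteratedDeriv 2 f x₀ / 2 * (m * t) ^ 2 + iteratedDeriv 3 f x₀ / 6 * (m * t) ^ 3
        + iteratedDeriv 4 f x₀ / 24 * (m * t) ^ 4 + iteratedDeriv 5 f x₀ / 120 * (m * t) ^ 5 := by
    rw [taylor_within_apply]
    have hW : ∀ k : ℕ, iteratedDerivWithin k g (Icc (0:ℝ) 1) 0 = m ^ k * iteratedDeriv k f x₀ := by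
      intro k
      rw [myIDW hg (uniqueDiffOn_Icc zero_lt_one) (left_mem_Icc.mpr zero_le_one) k,
        myChain hf x₀ m k]
    simp only [Finset.sum_range_succ, Finset.sum_range_zero, hW, sub_zero, smul_eq_mul]
    norm_num [Nat.factorial]
    ring
  have := hC t ht
  rw [hT] at this
  simpa [Real.norm_eq_abs] using this

noncomputable def wP (f : ℝ → ℝ) (x₀ m t : ℝ) : ℝ :=
  f x₀ + deriv f x₀ * (m * t) + iteratedDeriv 2 f x₀ / 2 * (m * t) ^ 2
    + iteratedDeriv 3 f x₀ / 6 * (m * t) ^ 3 + iteratedDeriv 4 f x₀ / 24 * (m * t) ^ 4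
    + iteratedDeriv 5 f x₀ / 120 * (m * t) ^ 5

lemma wE {f : ℝ → ℝ} (hf : ContDiff ℝ (⊤ : ℕ∞) f) (x₀ m : ℝ) :
    (fun t => f (x₀ + m * t) - wP f x₀ m t) =O[𝓝[>] (0:ℝ)] fun t => t ^ 6 := by
  obtain ⟨C, hC⟩ := myTaylor hf x₀ m
  simp only [iteratedDeriv_zero, iteratedDeriv_one] at hC
  rw [isBigO_iff]
  refine ⟨C, ?_⟩
  filter_upwards [Ioc_mem_nhdsGT (zero_lt_one (α := ℝ))] with t ht
  have h6 : ‖t ^ 6‖ = t ^ 6 := by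
    rw [Real.norm_eq_abs, abs_of_pos (pow_pos ht.1 _)]
  rw [Real.norm_eq_abs, h6]
  exact hC t ⟨ht.1.le, ht.2⟩

/-- Taylor expansion of `β₀ - β₂` and the `O(Δx⁵)` bound for the WENO-Z global
smoothness indicator `τ₅ = |β₀ - β₂|`, as `Δx → 0⁺`. -/
theorem tau5_expansion (f : ℝ → ℝ) (hf : ContDiff ℝ (⊤ : ℕ∞) f) (x₀ : ℝ) :
    ((fun Δx : ℝ =>
        (((13 / 12) * (f (x₀ - 2 * Δx) - 2 * f (x₀ - Δx) + f x₀) ^ 2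
            + (1 / 4) * (f (x₀ - 2 * Δx) - 4 * f (x₀ - Δx) + 3 * f x₀) ^ 2)
          - ((13 / 12) * (f x₀ - 2 * f (x₀ + Δx) + f (x₀ + 2 * Δx)) ^ 2
            + (1 / 4) * (3 * f x₀ - 4 * f (x₀ + Δx) + f (x₀ + 2 * Δx)) ^ 2))
          - (deriv f x₀ * iteratedDeriv 4 f x₀
              - (13 / 3) * iteratedDeriv 2 f x₀ * iteratedDeriv 3 f x₀) * Δx ^ 5)
        =O[𝓝[>] (0 : ℝ)] fun Δx => Δx ^ 6) ∧
    ((fun Δx : ℝ =>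
        |(((13 / 12) * (f (x₀ - 2 * Δx) - 2 * f (x₀ - Δx) + f x₀) ^ 2
            + (1 / 4) * (f (x₀ - 2 * Δx) - 4 * f (x₀ - Δx) + 3 * f x₀) ^ 2)
          - ((13 / 12) * (f x₀ - 2 * f (x₀ + Δx) + f (x₀ + 2 * Δx)) ^ 2
            + (1 / 4) * (3 * f x₀ - 4 * f (x₀ + Δx) + f (x₀ + 2 * Δx)) ^ 2))|)
        =O[𝓝[>] (0 : ℝ)] fun Δx => Δx ^ 5) := by
  have hfc : Continuous f := hf.continuous
  have hwc : ∀ m : ℝ, Continuous (fun t => wP f x₀ m t) := by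
    intro m; unfold wP; fun_prop
  -- specialized error bounds
  have hm2 : (fun t => f (x₀ - 2 * t) - wP f x₀ (-2) t) =O[𝓝[>] (0:ℝ)] fun t => t ^ 6 :=
    (wE hf x₀ (-2)).congr
      (fun t => by rw [show x₀ + (-2 : ℝ) * t = x₀ - 2 * t by ring]) (fun t => rfl)
  have hm1 : (fun t => f (x₀ - t) - wP f x₀ (-1) t) =O[𝓝[>] (0:ℝ)] fun t => t ^ 6 :=
    (wE hf x₀ (-1)).congr
      (fun t => by rw [show x₀ + (-1 : ℝ) * t = x₀ - t by ring]) (fun t => rfl)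
  have hp1 : (fun t => f (x₀ + t) - wP f x₀ 1 t) =O[𝓝[>] (0:ℝ)] fun t => t ^ 6 :=
    (wE hf x₀ 1).congr
      (fun t => by rw [show x₀ + (1 : ℝ) * t = x₀ + t by ring]) (fun t => rfl)
  have hp2 : (fun t => f (x₀ + 2 * t) - wP f x₀ 2 t) =O[𝓝[>] (0:ℝ)] fun t => t ^ 6 :=
    wE hf x₀ 2
  -- difference-of-squares bounds
  have key : ∀ (u P : ℝ → ℝ), Continuous u → Continuous P →
      ((fun t => u t - P t) =O[𝓝[>] (0:ℝ)] fun t => t ^ 6) →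
      (fun t => u t ^ 2 - P t ^ 2) =O[𝓝[>] (0:ℝ)] fun t => t ^ 6 := by
    intro u P hu hP he
    have hs : (fun t => u t + P t) =O[𝓝[>] (0:ℝ)] (fun _ => (1 : ℝ)) :=
      (((hu.add hP).tendsto 0).mono_left nhdsWithin_le_nhds).isBigO_one ℝ
    exact (he.mul hs).congr (fun t => by ring) (fun t => mul_one _)
  have dA := key _ _ (by fun_prop) (by fun_prop)
    (hm2.sub (hm1.const_mul_left 2) |>.congr (fun t => by ring) (fun t => rfl) :
      (fun t => (f (x₀ - 2 * t) - 2 * f (x₀ - t) + f x₀)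
        - (wP f x₀ (-2) t - 2 * wP f x₀ (-1) t + f x₀)) =O[𝓝[>] (0:ℝ)] fun t => t ^ 6)
  have dB := key _ _ (by fun_prop) (by fun_prop)
    (hm2.sub (hm1.const_mul_left 4) |>.congr (fun t => by ring) (fun t => rfl) :
      (fun t => (f (x₀ - 2 * t) - 4 * f (x₀ - t) + 3 * f x₀)
        - (wP f x₀ (-2) t - 4 * wP f x₀ (-1) t + 3 * f x₀)) =O[𝓝[>] (0:ℝ)] fun t => t ^ 6)
  have dC := key _ _ (by fun_prop) (by fun_prop)
    (hp2.sub (hp1.const_mul_left 2) |>.congr (fun t => by ring) (fun t => rfl) :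
      (fun t => (f x₀ - 2 * f (x₀ + t) + f (x₀ + 2 * t))
        - (f x₀ - 2 * wP f x₀ 1 t + wP f x₀ 2 t)) =O[𝓝[>] (0:ℝ)] fun t => t ^ 6)
  have dD := key _ _ (by fun_prop) (by fun_prop)
    (hp2.sub (hp1.const_mul_left 4) |>.congr (fun t => by ring) (fun t => rfl) :
      (fun t => (3 * f x₀ - 4 * f (x₀ + t) + f (x₀ + 2 * t))
        - (3 * f x₀ - 4 * wP f x₀ 1 t + wP f x₀ 2 t)) =O[𝓝[>] (0:ℝ)] fun t => t ^ 6)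
  -- polynomial part
  have hQ : (fun t : ℝ => (-(103/36) * iteratedDeriv 3 f x₀ * iteratedDeriv 4 f x₀
        - (13/12) * iteratedDeriv 2 f x₀ * iteratedDeriv 5 f x₀) * t
        + (-(539/720)) * iteratedDeriv 4 f x₀ * iteratedDeriv 5 f x₀ * t ^ 3)
      =O[𝓝[>] (0:ℝ)] (fun _ => (1:ℝ)) :=
    (((by fun_prop : Continuous (fun t : ℝ =>
        (-(103/36) * iteratedDeriv 3 f x₀ * iteratedDeriv 4 f x₀
        - (13/12) * iteratedDeriv 2 f x₀ * iteratedDeriv 5 f x₀) * t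
        + (-(539/720)) * iteratedDeriv 4 f x₀ * iteratedDeriv 5 f x₀ * t ^ 3)).tendsto
        0).mono_left nhdsWithin_le_nhds).isBigO_one ℝ
  have hpoly : (fun t : ℝ =>
      ((13 : ℝ) / 12) * ((wP f x₀ (-2) t - 2 * wP f x₀ (-1) t + f x₀) ^ 2
          - (f x₀ - 2 * wP f x₀ 1 t + wP f x₀ 2 t) ^ 2)
        + (1 / 4) * ((wP f x₀ (-2) t - 4 * wP f x₀ (-1) t + 3 * f x₀) ^ 2
          - (3 * f x₀ - 4 * wP f x₀ 1 t + wP f x₀ 2 t) ^ 2)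
        - (deriv f x₀ * iteratedDeriv 4 f x₀
            - (13 / 3) * iteratedDeriv 2 f x₀ * iteratedDeriv 3 f x₀) * t ^ 5)
      =O[𝓝[>] (0:ℝ)] fun t => t ^ 6 :=
    ((isBigO_refl (fun t : ℝ => t ^ 6) _).mul hQ).congr
      (fun t => by simp only [wP]; ring) (fun t => mul_one _)
  have part1 := ((((dA.const_mul_left (13/12)).add (dB.const_mul_left (1/4))).sub
      ((dC.const_mul_left (13/12)).add (dD.const_mul_left (1/4)))).add hpoly).congr
      (f₂ := fun Δx : ℝ =>
        (((13 / 12) * (f (x₀ - 2 * Δx) - 2 * f (x₀ - Δx) + f x₀) ^ 2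
            + (1 / 4) * (f (x₀ - 2 * Δx) - 4 * f (x₀ - Δx) + 3 * f x₀) ^ 2)
          - ((13 / 12) * (f x₀ - 2 * f (x₀ + Δx) + f (x₀ + 2 * Δx)) ^ 2
            + (1 / 4) * (3 * f x₀ - 4 * f (x₀ + Δx) + f (x₀ + 2 * Δx)) ^ 2))
          - (deriv f x₀ * iteratedDeriv 4 f x₀
              - (13 / 3) * iteratedDeriv 2 f x₀ * iteratedDeriv 3 f x₀) * Δx ^ 5)
      (g₂ := fun Δx : ℝ => Δx ^ 6)
      (fun t => by ring) (fun t => rfl)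
  refine ⟨part1, ?_⟩
  have h65 : (fun t : ℝ => t ^ 6) =O[𝓝[>] (0:ℝ)] fun t => t ^ 5 := by
    rw [isBigO_iff]
    refine ⟨1, ?_⟩
    filter_upwards [Ioc_mem_nhdsGT (zero_lt_one (α := ℝ))] with t ht
    rw [Real.norm_eq_abs, Real.norm_eq_abs, abs_of_pos (pow_pos ht.1 _),
      abs_of_pos (pow_pos ht.1 _), one_mul]
    exact pow_le_pow_of_le_one ht.1.le ht.2 (by norm_num)
  have hG := ((part1.trans h65).add
      ((isBigO_refl (fun t : ℝ => t ^ 5) _).const_mul_left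
        (deriv f x₀ * iteratedDeriv 4 f x₀
          - (13 / 3) * iteratedDeriv 2 f x₀ * iteratedDeriv 3 f x₀))).congr
      (f₂ := fun Δx : ℝ =>
        (((13 / 12) * (f (x₀ - 2 * Δx) - 2 * f (x₀ - Δx) + f x₀) ^ 2
            + (1 / 4) * (f (x₀ - 2 * Δx) - 4 * f (x₀ - Δx) + 3 * f x₀) ^ 2)
          - ((13 / 12) * (f x₀ - 2 * f (x₀ + Δx) + f (x₀ + 2 * Δx)) ^ 2
            + (1 / 4) * (3 * f x₀ - 4 * f (x₀ + Δx) + f (x₀ + 2 * Δx)) ^ 2)))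
      (g₂ := fun Δx : ℝ => Δx ^ 5)
      (fun t => by ring) (fun t => rfl)
  exact hG.abs_left
end
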